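/- arXiv:1409.2695 — 5 statements merged into one kernel-verified Lean document; each statement's English description precedes it below -/
import Mathlib

section
/- If S is a strong resolving set of a connected graph G, then for every two distinct vertices u,v ∈ V(G) satisfying d(w,v) ≤ d(u,v) for all w ∈ N(u) and d(u,w) ≤ d(u,v) for all w ∈ N(v), we have u ∈ S or v ∈ S. -/
def IsStrongResolvingSet {V : Type*} (G : SimpleGraph V) (S : Set V) : Prop :=
  ∀ u v : V, u ≠ v → ∃ x ∈ S, G.dist v x = G.dist v u + G.dist u x ∨
    G.dist u x = G.dist u v + G.dist v x

lemma exists_nbr_dist_succ {V : Type*} (G : SimpleGraph V) (hG : G.Connected)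
    {u x : V} (h : u ≠ x) : ∃ w, G.Adj u w ∧ G.dist w x + 1 ≤ G.dist u x := by
  obtain ⟨p, hp⟩ := hG.exists_walk_length_eq_dist u x
  cases p with
  | nil => exact absurd rfl h
  | cons ha q =>
    refine ⟨_, ha, ?_⟩
    rw [← hp, SimpleGraph.Walk.length_cons]
    exact Nat.add_le_add_right (SimpleGraph.dist_le q) 1

theorem mutually_maximally_distant_in_strong_resolving_set {V : Type*} [Fintype V]
    (G : SimpleGraph V) (hG : G.Connected) (S : Set V)
    (hS : IsStrongResolvingSet G S) :
    ∀ u v : V, u ≠ v →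
      (∀ w ∈ G.neighborSet u, G.dist w v ≤ G.dist u v) →
      (∀ w ∈ G.neighborSet v, G.dist u w ≤ G.dist u v) →
      u ∈ S ∨ v ∈ S := by
  intro u v huv hu hv
  obtain ⟨x, hxS, h | h⟩ := hS u v huv
  · left
    suffices hx : x = u by rwa [hx] at hxS
    by_contra hxu
    obtain ⟨w, haw, hw⟩ := exists_nbr_dist_succ G hG (Ne.symm hxu)
    have h1 : G.dist v x ≤ G.dist v w + G.dist w x := hG.dist_triangle
    have h2 : G.dist v w ≤ G.dist u v := by
      rw [SimpleGraph.dist_comm]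
      exact hu w haw
    have h3 : G.dist v u = G.dist u v := SimpleGraph.dist_comm
    omega
  · right
    suffices hx : x = v by rwa [hx] at hxS
    by_contra hxv
    obtain ⟨w, haw, hw⟩ := exists_nbr_dist_succ G hG (Ne.symm hxv)
    have h1 : G.dist u x ≤ G.dist u w + G.dist w x := hG.dist_triangle
    have h2 : G.dist u w ≤ G.dist u v := hv w haw
    omega
end

section
/- For n = 2k+1 with k ≥ 2, the set {a_1, a_{k+1}} is a local resolving set of the convex polytope graph S_n; hence lmd(S_n) = 2 for odd n ≥ 5 (since S_n is not bipartite). -/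
/-- Layers: 0 = a, 1 = b, 2 = c, 3 = d. Vertex `(ℓ, i)` is `ℓ_i` (indices mod `n`). -/
def snRel (n : ℕ) (x y : Fin 4 × ZMod n) : Prop :=
  (x.1 = y.1 ∧ y.2 = x.2 + 1) ∨                                -- cycle edges on each layer
  (x.1 = 0 ∧ y.1 = 1 ∧ (x.2 = y.2 ∨ x.2 = y.2 + 1)) ∨          -- a_i b_i and a_{i+1} b_i
  (x.1 = 1 ∧ y.1 = 2 ∧ x.2 = y.2) ∨                            -- b_i c_i
  (x.1 = 2 ∧ y.1 = 3 ∧ x.2 = y.2)                              -- c_i d_i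

/-- The convex polytope graph `S_n`. -/
def Sn (n : ℕ) : SimpleGraph (Fin 4 × ZMod n) := SimpleGraph.fromRel (snRel n)

def IsLocalResolvingSet {V : Type*} (G : SimpleGraph V) (W : Set V) : Prop :=
  ∀ u v : V, G.Adj u v → ∃ w ∈ W, G.dist u w ≠ G.dist v w

noncomputable def localMetricDim {V : Type*} [Fintype V] (G : SimpleGraph V) : ℕ :=
  sInf {k | ∃ W : Finset V, IsLocalResolvingSet G ↑W ∧ W.card = k}

noncomputable def strongMetricDim {V : Type*} [Fintype V] (G : SimpleGraph V) : ℕ :=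
  sInf {k | ∃ S : Finset V, IsStrongResolvingSet G ↑S ∧ S.card = k}

namespace SnLmd
open SimpleGraph

variable {n : ℕ}

def hh (n f : ℕ) : ℕ := min f (n - f)
def gg (n f : ℕ) : ℕ := min (max f 1) (n - f + 1)

def DD (n : ℕ) (x : Fin 4 × ZMod n) (i : ZMod n) : ℕ :=
  if x.1 = 0 then hh n (i - x.2).val else gg n (i - x.2).val + (x.1.val - 1)

lemma mkAdj {x y : Fin 4 × ZMod n} (hne : x ≠ y) (h : snRel n x y ∨ snRel n y x) :
    (Sn n).Adj x y := by
  rw [Sn, SimpleGraph.fromRel_adj]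
  exact ⟨hne, h⟩

lemma one_ne_zero' (hn : 2 ≤ n) : (1 : ZMod n) ≠ 0 := by
  haveI : Fact (1 < n) := ⟨by omega⟩
  exact one_ne_zero

lemma adj_cycle (hn : 2 ≤ n) (ℓ : Fin 4) (j : ZMod n) : (Sn n).Adj (ℓ, j) (ℓ, j + 1) := by
  refine mkAdj ?_ (Or.inl (Or.inl ⟨rfl, rfl⟩))
  intro h
  have h2 : j + 0 = j + 1 := by simpa using congrArg Prod.snd h
  exact one_ne_zero' hn (add_left_cancel h2).symm

lemma adj_ab (j : ZMod n) : (Sn n).Adj (0, j) (1, j) :=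
  mkAdj (by simp [Prod.ext_iff]) (Or.inl (Or.inr (Or.inl ⟨rfl, rfl, Or.inl rfl⟩)))

lemma adj_ab' (j : ZMod n) : (Sn n).Adj (0, j + 1) (1, j) :=
  mkAdj (by simp [Prod.ext_iff]) (Or.inl (Or.inr (Or.inl ⟨rfl, rfl, Or.inr rfl⟩)))

lemma adj_bc (j : ZMod n) : (Sn n).Adj (1, j) (2, j) :=
  mkAdj (by simp [Prod.ext_iff]) (Or.inl (Or.inr (Or.inr (Or.inl ⟨rfl, rfl, rfl⟩))))

lemma adj_cd (j : ZMod n) : (Sn n).Adj (2, j) (3, j) :=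
  mkAdj (by simp [Prod.ext_iff]) (Or.inl (Or.inr (Or.inr (Or.inr ⟨rfl, rfl, rfl⟩))))
lemma walkA (hn : 2 ≤ n) (i : ZMod n) (m : ℕ) : ∀ j : ZMod n, j + (m : ZMod n) = i →
    ∃ p : (Sn n).Walk (0, j) (0, i), p.length = m := by
  induction m with
  | zero => intro j h; simp only [Nat.cast_zero, add_zero] at h; subst h; exact ⟨.nil, rfl⟩
  | succ m ih =>
    intro j h
    obtain ⟨p, hp⟩ := ih (j + 1) (by push_cast at h ⊢; rw [← h]; ring)
    exact ⟨.cons (adj_cycle hn 0 j) p, by simp [hp]⟩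

lemma walkA' (hn : 2 ≤ n) (i : ZMod n) (m : ℕ) : ∀ j : ZMod n, j = i + (m : ZMod n) →
    ∃ p : (Sn n).Walk (0, j) (0, i), p.length = m := by
  induction m with
  | zero => intro j h; simp only [Nat.cast_zero, add_zero] at h; subst h; exact ⟨.nil, rfl⟩
  | succ m ih =>
    intro j h
    obtain ⟨p, hp⟩ := ih (j - 1) (by push_cast at h ⊢; rw [h]; ring)
    have hadj : (Sn n).Adj (0, j) (0, j - 1) := by
      simpa using (adj_cycle hn 0 (j - 1)).symm
    exact ⟨.cons hadj p, by simp [hp]⟩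

lemma walkB (hn : 2 ≤ n) (i : ZMod n) (m : ℕ) : ∀ j : ZMod n, j + 1 + (m : ZMod n) = i →
    ∃ p : (Sn n).Walk (1, j) (0, i), p.length = m + 1 := by
  induction m with
  | zero =>
    intro j h
    simp only [Nat.cast_zero, add_zero] at h
    subst h
    exact ⟨.cons (adj_ab' j).symm .nil, by simp⟩
  | succ m ih =>
    intro j h
    obtain ⟨p, hp⟩ := ih (j + 1) (by push_cast at h ⊢; rw [← h]; ring)
    exact ⟨.cons (adj_cycle hn 1 j) p, by simp [hp]⟩

lemma walkB' (hn : 2 ≤ n) (i : ZMod n) (m : ℕ) : ∀ j : ZMod n, j = i + (m : ZMod n) →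
    ∃ p : (Sn n).Walk (1, j) (0, i), p.length = m + 1 := by
  induction m with
  | zero =>
    intro j h
    have hji : j = i := by simpa using h
    subst hji
    exact ⟨.cons (adj_ab _).symm .nil, by simp⟩
  | succ m ih =>
    intro j h
    obtain ⟨p, hp⟩ := ih (j - 1) (by push_cast at h ⊢; rw [h]; ring)
    have hadj : (Sn n).Adj (1, j) (1, j - 1) := by
      simpa using (adj_cycle hn 1 (j - 1)).symm
    exact ⟨.cons hadj p, by simp [hp]⟩

lemma exists_walk (hn : 2 ≤ n) (x : Fin 4 × ZMod n) (i : ZMod n) :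
    ∃ p : (Sn n).Walk x (0, i), p.length ≤ DD n x i := by
  haveI : NeZero n := ⟨by omega⟩
  obtain ⟨ℓ, j⟩ := x
  have hfn : (i - j).val < n := ZMod.val_lt _
  have hcast : (((i - j).val : ℕ) : ZMod n) = i - j := ZMod.natCast_zmod_val _
  have hfwd : j + (((i - j).val : ℕ) : ZMod n) = i := by rw [hcast]; ring
  have hbwd : j = i + ((n - (i - j).val : ℕ) : ZMod n) := by
    rw [Nat.cast_sub hfn.le, ZMod.natCast_self, hcast]; ring
  have hB : ∃ p : (Sn n).Walk (1, j) (0, i), p.length ≤ gg n (i - j).val := by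
    rcases Nat.eq_zero_or_pos (i - j).val with h0 | h1
    · obtain ⟨p, hp⟩ := walkB' hn i 0 j (by
        simp only [Nat.cast_zero, add_zero]
        have h2 : i - j = 0 := by rw [← hcast, h0]; simp
        exact (sub_eq_zero.mp h2).symm)
      refine ⟨p, ?_⟩
      rw [hp, h0]; unfold gg; omega
    · rcases le_or_gt ((i - j).val) (n - (i - j).val + 1) with hle | hlt
      · obtain ⟨p, hp⟩ := walkB hn i ((i - j).val - 1) j (by
          have h2 : (((i - j).val - 1 : ℕ) : ZMod n) = (((i - j).val : ℕ) : ZMod n) - 1 := by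
            push_cast [Nat.cast_sub h1]; ring
          rw [h2, hcast]; ring)
        refine ⟨p, ?_⟩
        rw [hp]; unfold gg; omega
      · obtain ⟨p, hp⟩ := walkB' hn i (n - (i - j).val) j hbwd
        refine ⟨p, ?_⟩
        rw [hp]; unfold gg; omega
  fin_cases ℓ
  · rcases le_or_gt ((i - j).val) (n - (i - j).val) with hle | hlt
    · obtain ⟨p, hp⟩ := walkA hn i ((i - j).val) j hfwd
      refine ⟨p, ?_⟩
      simp only [DD]; rw [if_pos (by decide)]
      rw [hp]; unfold hh; omega
    · obtain ⟨p, hp⟩ := walkA' hn i (n - (i - j).val) j hbwd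
      refine ⟨p, ?_⟩
      simp only [DD]; rw [if_pos (by decide)]
      rw [hp]; unfold hh; omega
  · obtain ⟨p, hp⟩ := hB
    refine ⟨p, ?_⟩
    simp only [DD]; rw [if_neg (by decide)]
    simpa using hp
  · obtain ⟨p, hp⟩ := hB
    refine ⟨.cons (adj_bc j).symm p, ?_⟩
    simp only [DD, Walk.length_cons]; rw [if_neg (by decide)]
    have : ((⟨2, by omega⟩ : Fin 4)).val = 2 := rfl
    omega
  · obtain ⟨p, hp⟩ := hB
    refine ⟨.cons (adj_cd j).symm (.cons (adj_bc j).symm p), ?_⟩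
    simp only [DD, Walk.length_cons]; rw [if_neg (by decide)]
    have : ((⟨3, by omega⟩ : Fin 4)).val = 3 := rfl
    omega
lemma val_add' [NeZero n] (a b : ZMod n) :
    (a + b).val = a.val + b.val ∨ (n ≤ a.val + b.val ∧ (a + b).val = a.val + b.val - n) := by
  rw [ZMod.val_add]
  rcases lt_or_ge (a.val + b.val) n with h | h
  · exact Or.inl (Nat.mod_eq_of_lt h)
  · refine Or.inr ⟨h, ?_⟩
    rw [Nat.mod_eq_sub_mod h, Nat.mod_eq_of_lt]
    have := ZMod.val_lt a
    have := ZMod.val_lt b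
    omega

lemma val_neg_one' (hn : 2 ≤ n) : (-1 : ZMod n).val = n - 1 := by
  obtain ⟨m, rfl⟩ : ∃ m, n = m + 1 := ⟨n - 1, by omega⟩
  simpa using ZMod.val_neg_one m

lemma val_one' (hn : 2 ≤ n) : (1 : ZMod n).val = 1 := by
  haveI : Fact (1 < n) := ⟨by omega⟩
  exact ZMod.val_one n

lemma lip (hn : 2 ≤ n) {x y : Fin 4 × ZMod n} (h : snRel n x y) (i : ZMod n) :
    DD n x i ≤ DD n y i + 1 ∧ DD n y i ≤ DD n x i + 1 := by
  haveI : NeZero n := ⟨by omega⟩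
  obtain ⟨lx, jx⟩ := x
  obtain ⟨ly, jy⟩ := y
  have hx : (i - jx).val < n := ZMod.val_lt _
  have hy : (i - jy).val < n := ZMod.val_lt _
  rcases h with ⟨hl, he⟩ | ⟨hlx, hly, hor⟩ | ⟨hlx, hly, he⟩ | ⟨hlx, hly, he⟩
  · -- cycle edge: jy = jx + 1
    dsimp only at hl he
    have he2 : i - jy = (i - jx) + (-1) := by rw [he]; ring
    have hv := val_add' (i - jx) (-1 : ZMod n)
    rw [← he2, val_neg_one' hn] at hv
    subst hl
    by_cases h0 : lx = 0
    · simp only [DD, if_pos h0]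
      unfold hh; omega
    · simp only [DD, if_neg h0]
      unfold gg; omega
  · -- a-b edges
    dsimp only at hlx hly hor
    rcases hor with he | he
    · rw [he]
      simp only [DD, hlx, hly]
      norm_num
      unfold hh gg
      omega
    · have he2 : i - jy = (i - jx) + 1 := by rw [he]; ring
      have hv := val_add' (i - jx) (1 : ZMod n)
      rw [← he2, val_one' hn] at hv
      simp only [DD, hlx, hly]
      norm_num
      unfold hh gg
      omega
  · dsimp only at hlx hly he
    rw [he]
    simp only [DD, hlx, hly]
    rw [if_neg (by decide), if_neg (by decide)]
    have h1 : (1 : Fin 4).val = 1 := rfl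
    have h2 : (2 : Fin 4).val = 2 := rfl
    rw [h1, h2]
    omega
  · dsimp only at hlx hly he
    rw [he]
    simp only [DD, hlx, hly]
    rw [if_neg (by decide), if_neg (by decide)]
    have h2 : (2 : Fin 4).val = 2 := rfl
    have h3 : (3 : Fin 4).val = 3 := rfl
    rw [h2, h3]
    omega

lemma DD_le_length (hn : 2 ≤ n) (i : ZMod n) {x : Fin 4 × ZMod n}
    (p : (Sn n).Walk x (0, i)) : DD n x i ≤ p.length := by
  haveI : NeZero n := ⟨by omega⟩
  suffices H : ∀ (u z : Fin 4 × ZMod n) (q : (Sn n).Walk u z), z = (0, i) →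
      DD n u i ≤ q.length from H _ _ p rfl
  intro u z q
  induction q with
  | nil => rintro rfl; simp [DD, hh]
  | cons h q ih =>
    intro hz
    have hq := ih hz
    rw [Sn, SimpleGraph.fromRel_adj] at h
    obtain ⟨hne, hrel | hrel⟩ := h
    · have := (lip hn hrel i).1
      simp only [Walk.length_cons]
      omega
    · have := (lip hn hrel i).2
      simp only [Walk.length_cons]
      omega

lemma dist_eq (hn : 2 ≤ n) (x : Fin 4 × ZMod n) (i : ZMod n) :
    (Sn n).dist x (0, i) = DD n x i := by
  obtain ⟨p, hp⟩ := exists_walk hn x i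
  refine le_antisymm (le_trans (SimpleGraph.dist_le p) hp) ?_
  obtain ⟨q, hq⟩ := (Reachable.exists_walk_length_eq_dist ⟨p⟩ :
    ∃ q : (Sn n).Walk x (0, i), q.length = (Sn n).dist x (0, i))
  rw [← hq]
  exact DD_le_length hn i q
lemma key (k : ℕ) (hk : 2 ≤ k) {u v : Fin 4 × ZMod (2*k+1)} (h : snRel (2*k+1) u v) :
    DD (2*k+1) u ((1:ℕ) : ZMod (2*k+1)) ≠ DD (2*k+1) v ((1:ℕ) : ZMod (2*k+1)) ∨
    DD (2*k+1) u ((k+1:ℕ) : ZMod (2*k+1)) ≠ DD (2*k+1) v ((k+1:ℕ) : ZMod (2*k+1)) := by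
  haveI : NeZero (2*k+1) := ⟨by omega⟩
  set i1 : ZMod (2*k+1) := ((1:ℕ) : ZMod (2*k+1)) with hi1
  set i2 : ZMod (2*k+1) := ((k+1:ℕ) : ZMod (2*k+1)) with hi2def
  have hi2 : i2 = i1 + ((k:ℕ) : ZMod (2*k+1)) := by rw [hi1, hi2def]; push_cast; ring
  have hkv : ((k:ℕ) : ZMod (2*k+1)).val = k := ZMod.val_cast_of_lt (by omega)
  have hn : 2 ≤ 2*k+1 := by omega
  have hlk : ∀ j : ZMod (2*k+1), (i2 - j).val = (i1 - j).val + k ∨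
      (2*k+1 ≤ (i1 - j).val + k ∧ (i2 - j).val = (i1 - j).val + k - (2*k+1)) := by
    intro j
    have hv := val_add' (i1 - j) ((k:ℕ) : ZMod (2*k+1))
    rw [hkv] at hv
    rwa [show i1 - j + ((k:ℕ) : ZMod (2*k+1)) = i2 - j by rw [hi2]; ring] at hv
  obtain ⟨lu, ju⟩ := u
  obtain ⟨lv, jv⟩ := v
  have b1u : (i1 - ju).val < 2*k+1 := ZMod.val_lt _
  have b2u : (i2 - ju).val < 2*k+1 := ZMod.val_lt _
  have b1v : (i1 - jv).val < 2*k+1 := ZMod.val_lt _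
  have b2v : (i2 - jv).val < 2*k+1 := ZMod.val_lt _
  have hlku := hlk ju
  have hlkv := hlk jv
  rcases h with ⟨hl, he⟩ | ⟨hlx, hly, hor⟩ | ⟨hlx, hly, he⟩ | ⟨hlx, hly, he⟩
  · -- cycle edge: jv = ju + 1
    dsimp only at hl he
    have hv1 := val_add' (i1 - ju) (-1 : ZMod (2*k+1))
    rw [val_neg_one' hn, show i1 - ju + (-1 : ZMod (2*k+1)) = i1 - jv by rw [he]; ring] at hv1
    have hv2 := val_add' (i2 - ju) (-1 : ZMod (2*k+1))
    rw [val_neg_one' hn, show i2 - ju + (-1 : ZMod (2*k+1)) = i2 - jv by rw [he]; ring] at hv2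
    subst hl
    by_cases h0 : lu = 0
    · simp only [DD, if_pos h0]
      unfold hh; omega
    · simp only [DD, if_neg h0]
      unfold gg; omega
  · -- a-b edges
    dsimp only at hlx hly hor
    rcases hor with he | he
    · rw [he]
      simp only [DD]
      rw [hlx, hly]
      simp only [reduceIte]
      rw [if_neg (show ¬(1:Fin 4) = 0 by decide), if_neg (show ¬(1:Fin 4) = 0 by decide)]
      have e1 : ((1:Fin 4)).val = 1 := rfl
      rw [e1]
      unfold hh gg
      omega
    · have hv1 := val_add' (i1 - ju) (1 : ZMod (2*k+1))
      rw [val_one' hn, show i1 - ju + (1 : ZMod (2*k+1)) = i1 - jv by rw [he]; ring] at hv1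
      have hv2 := val_add' (i2 - ju) (1 : ZMod (2*k+1))
      rw [val_one' hn, show i2 - ju + (1 : ZMod (2*k+1)) = i2 - jv by rw [he]; ring] at hv2
      simp only [DD]
      rw [hlx, hly]
      simp only [reduceIte]
      rw [if_neg (show ¬(1:Fin 4) = 0 by decide), if_neg (show ¬(1:Fin 4) = 0 by decide)]
      have e1 : ((1:Fin 4)).val = 1 := rfl
      rw [e1]
      unfold hh gg
      omega
  · dsimp only at hlx hly he
    rw [he]
    left
    simp only [DD]
    rw [hlx, hly, if_neg (by decide), if_neg (by decide)]
    have e1 : ((1:Fin 4)).val = 1 := rfl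
    have e2 : ((2:Fin 4)).val = 2 := rfl
    rw [e1, e2]
    omega
  · dsimp only at hlx hly he
    rw [he]
    left
    simp only [DD]
    rw [hlx, hly, if_neg (by decide), if_neg (by decide)]
    have e2 : ((2:Fin 4)).val = 2 := rfl
    have e3 : ((3:Fin 4)).val = 3 := rfl
    rw [e2, e3]
    omega

lemma resolving (k : ℕ) (hk : 2 ≤ k) :
    IsLocalResolvingSet (Sn (2 * k + 1))
      {((0 : Fin 4), ((1 : ℕ) : ZMod (2 * k + 1))),
       ((0 : Fin 4), ((k + 1 : ℕ) : ZMod (2 * k + 1)))} := by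
  intro u v huv
  have hn : 2 ≤ 2*k+1 := by omega
  rw [Sn, SimpleGraph.fromRel_adj] at huv
  obtain ⟨hne, hrel | hrel⟩ := huv
  · rcases key k hk hrel with hd | hd
    · exact ⟨_, Or.inl rfl, by rw [dist_eq hn, dist_eq hn]; exact hd⟩
    · exact ⟨_, Or.inr rfl, by rw [dist_eq hn, dist_eq hn]; exact hd⟩
  · rcases key k hk hrel with hd | hd
    · exact ⟨_, Or.inl rfl, by rw [dist_eq hn, dist_eq hn]; exact hd.symm⟩
    · exact ⟨_, Or.inr rfl, by rw [dist_eq hn, dist_eq hn]; exact hd.symm⟩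
lemma reach (hn : 2 ≤ n) (x y : Fin 4 × ZMod n) : (Sn n).Reachable x y := by
  obtain ⟨p, -⟩ := exists_walk hn x 0
  obtain ⟨q, -⟩ := exists_walk hn y 0
  exact Reachable.trans ⟨p⟩ (Reachable.symm ⟨q⟩)

lemma no_singleton (k : ℕ) (hk : 2 ≤ k) (w : Fin 4 × ZMod (2*k+1)) :
    ¬ IsLocalResolvingSet (Sn (2*k+1)) {w} := by
  intro hres
  haveI : NeZero (2*k+1) := ⟨by omega⟩
  have hn : 2 ≤ 2*k+1 := by omega
  have step : ∀ u v : Fin 4 × ZMod (2*k+1), (Sn (2*k+1)).Adj u v →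
      ((Sn (2*k+1)).dist u w + (Sn (2*k+1)).dist v w) % 2 = 1 := by
    intro u v hadj
    obtain ⟨w', hw', hd⟩ := hres u v hadj
    rw [Set.mem_singleton_iff] at hw'
    subst hw'
    obtain ⟨q, hq⟩ := (reach hn v w').exists_walk_length_eq_dist
    have h1 : (Sn (2*k+1)).dist u w' ≤ (Sn (2*k+1)).dist v w' + 1 := by
      have := SimpleGraph.dist_le (Walk.cons hadj q)
      simpa [hq] using this
    obtain ⟨q2, hq2⟩ := (reach hn u w').exists_walk_length_eq_dist
    have h2 : (Sn (2*k+1)).dist v w' ≤ (Sn (2*k+1)).dist u w' + 1 := by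
      have := SimpleGraph.dist_le (Walk.cons hadj.symm q2)
      simpa [hq2] using this
    omega
  have hpar : ∀ m : ℕ,
      ((Sn (2*k+1)).dist (0, (0:ZMod (2*k+1))) w +
        (Sn (2*k+1)).dist (0, ((m:ℕ) : ZMod (2*k+1))) w + m) % 2 = 0 := by
    intro m
    induction m with
    | zero => simp only [Nat.cast_zero]; omega
    | succ m ih =>
      have hadj : (Sn (2*k+1)).Adj (0, ((m:ℕ) : ZMod (2*k+1))) (0, ((m+1:ℕ) : ZMod (2*k+1))) := by
        have := adj_cycle hn 0 ((m:ℕ) : ZMod (2*k+1))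
        simpa [Nat.cast_add, Nat.cast_one] using this
      have := step _ _ hadj
      omega
  have h0 := hpar (2*k+1)
  rw [ZMod.natCast_self] at h0
  omega

lemma w1_ne_w2 (k : ℕ) (hk : 2 ≤ k) :
    ((0 : Fin 4), ((1 : ℕ) : ZMod (2 * k + 1))) ≠
      ((0 : Fin 4), ((k + 1 : ℕ) : ZMod (2 * k + 1))) := by
  haveI : NeZero (2*k+1) := ⟨by omega⟩
  intro h
  have h2 := congrArg (fun p => (p.2 : ZMod (2*k+1)).val) h
  simp only at h2
  rw [ZMod.val_cast_of_lt (by omega), ZMod.val_cast_of_lt (by omega)] at h2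
  omega

end SnLmd

theorem lmd_Sn_odd (k : ℕ) (hk : 2 ≤ k) :
    IsLocalResolvingSet (Sn (2 * k + 1))
      {((0 : Fin 4), ((1 : ℕ) : ZMod (2 * k + 1))),
       ((0 : Fin 4), ((k + 1 : ℕ) : ZMod (2 * k + 1)))} ∧
    localMetricDim (Sn (2 * k + 1)) = 2 := by
  haveI : NeZero (2*k+1) := ⟨by omega⟩
  have hn : 2 ≤ 2*k+1 := by omega
  refine ⟨SnLmd.resolving k hk, ?_⟩
  have mem2 : 2 ∈ {m | ∃ W : Finset (Fin 4 × ZMod (2*k+1)),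
      IsLocalResolvingSet (Sn (2*k+1)) ↑W ∧ W.card = m} := by
    refine ⟨{((0 : Fin 4), ((1 : ℕ) : ZMod (2 * k + 1))),
       ((0 : Fin 4), ((k + 1 : ℕ) : ZMod (2 * k + 1)))}, ?_, ?_⟩
    · have hco : (↑({((0 : Fin 4), ((1 : ℕ) : ZMod (2 * k + 1))),
          ((0 : Fin 4), ((k + 1 : ℕ) : ZMod (2 * k + 1)))} :
            Finset (Fin 4 × ZMod (2*k+1))) : Set (Fin 4 × ZMod (2*k+1))) =
          {((0 : Fin 4), ((1 : ℕ) : ZMod (2 * k + 1))),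
           ((0 : Fin 4), ((k + 1 : ℕ) : ZMod (2 * k + 1)))} := by
        simp
      rw [hco]
      exact SnLmd.resolving k hk
    · rw [Finset.card_insert_of_notMem (by simpa using SnLmd.w1_ne_w2 k hk),
        Finset.card_singleton]
  unfold localMetricDim
  refine le_antisymm (Nat.sInf_le mem2) (le_csInf ⟨2, mem2⟩ ?_)
  rintro m ⟨W, hres, hcard⟩
  by_contra hlt
  push_neg at hlt
  interval_cases m
  · rw [Finset.card_eq_zero] at hcard
    subst hcard
    obtain ⟨w, hw, -⟩ := hres _ _ (SnLmd.adj_cycle hn 0 (0 : ZMod (2*k+1)))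
    simp at hw
  · rw [Finset.card_eq_one] at hcard
    obtain ⟨w, rfl⟩ := hcard
    exact SnLmd.no_singleton k hk w (by simpa using hres)
end

section
/- For even n = 2k ≥ 4, no 2-element subset of V(S_n) whose two vertices lie on the same cycle C_i (i ∈ {a,b,c,d}) is a local resolving set of S_n. -/
set_option linter.unusedSectionVars false
set_option linter.unusedTactic false
set_option maxHeartbeats 1000000


section
variable (k : ℕ)

def cyc (x : ZMod (2*k)) : ℕ := min x.val (2*k - x.val)

def pot (i : Fin 4) (j : ZMod (2*k)) (x : Fin 4 × ZMod (2*k)) : ℕ :=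
  if x.1 = 0 then
    if i = 0 then cyc k (x.2 - j)
    else i.val + min (cyc k (x.2 - j)) (cyc k (x.2 - j - 1))
  else
    if i = 0 then x.1.val + min (cyc k (x.2 - j)) (cyc k (x.2 - j + 1))
    else ((x.1.val - i.val) + (i.val - x.1.val)) + cyc k (x.2 - j)

variable {k} (hk : 1 ≤ k)
include hk

lemma cyc_lip (x : ZMod (2*k)) : cyc k (x+1) ≤ cyc k x + 1 ∧ cyc k x ≤ cyc k (x+1) + 1 := by
  haveI : NeZero (2*k) := ⟨by omega⟩
  haveI : Fact (1 < 2*k) := ⟨by omega⟩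
  have ha : x.val < 2*k := ZMod.val_lt x
  have hv : (x+1).val = (x.val+1) % (2*k) := by rw [ZMod.val_add, ZMod.val_one]
  rcases Nat.lt_or_ge (x.val+1) (2*k) with h | h
  · rw [Nat.mod_eq_of_lt h] at hv
    unfold cyc; rw [hv]; omega
  · have h2 : x.val + 1 = 2*k := by omega
    rw [h2, Nat.mod_self] at hv
    unfold cyc; rw [hv]; omega

lemma pot_lip (i : Fin 4) (j : ZMod (2*k)) {x y : Fin 4 × ZMod (2*k)}
    (h : (Sn (2*k)).Adj x y) : pot k i j x ≤ pot k i j y + 1 := by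
  suffices H : ∀ a b : Fin 4 × ZMod (2*k), snRel (2*k) a b →
      pot k i j a ≤ pot k i j b + 1 ∧ pot k i j b ≤ pot k i j a + 1 by
    rw [Sn, SimpleGraph.fromRel_adj] at h
    rcases h.2 with h' | h'
    · exact (H _ _ h').1
    · exact (H _ _ h').2
  have hi4 : i.val < 4 := i.isLt
  rintro ⟨ℓ, m⟩ ⟨ℓ', m'⟩ (⟨rfl, rfl⟩ | ⟨rfl, rfl, rfl | rfl⟩ | ⟨rfl, rfl, rfl⟩ | ⟨rfl, rfl, rfl⟩)
  · -- cycle edge (ℓ, m) — (ℓ, m+1)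
    have A := cyc_lip hk (m - j)
    have B := cyc_lip hk (m - j - 1)
    have C := cyc_lip hk (m - j + 1)
    by_cases hl : ℓ = 0 <;> by_cases hI : i = 0 <;>
      · simp [pot, hl, hI]
        ring_nf at A B C ⊢
        omega
  · -- a_m — b_m
    have A := cyc_lip hk (m - j)
    have B := cyc_lip hk (m - j - 1)
    by_cases hI : i = 0 <;>
      · simp [pot, hI]
        ring_nf at A B ⊢
        omega
  · -- a_{m'+1} — b_{m'}
    have A := cyc_lip hk (m' - j)
    by_cases hI : i = 0 <;>
      · simp [pot, hI]
        ring_nf at A ⊢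
        omega
  · -- b — c
    by_cases hI : i = 0 <;> · simp [pot, hI]; ring_nf; omega
  · -- c — d
    by_cases hI : i = 0 <;> · simp [pot, hI]; ring_nf; omega

lemma pot_self (i : Fin 4) (j : ZMod (2*k)) : pot k i j (i, j) = 0 := by
  haveI : NeZero (2*k) := ⟨by omega⟩
  have h0 : cyc k (0 : ZMod (2*k)) = 0 := by simp [cyc]
  by_cases hI : i = 0 <;> simp [pot, hI, sub_self, h0]

lemma pot_le_length_aux (i : Fin 4) (j : ZMod (2*k)) :
    ∀ {x y : Fin 4 × ZMod (2*k)} (p : (Sn (2*k)).Walk x y),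
      pot k i j x ≤ p.length + pot k i j y := by
  intro x y p
  induction p with
  | nil => simp
  | cons h p ih =>
    have := pot_lip hk i j h
    simp only [SimpleGraph.Walk.length_cons]
    omega

lemma pot_le_length (i : Fin 4) (j : ZMod (2*k)) {x : Fin 4 × ZMod (2*k)}
    (p : (Sn (2*k)).Walk x (i, j)) : pot k i j x ≤ p.length := by
  have := pot_le_length_aux hk i j p
  rw [pot_self hk] at this
  omega

lemma pot_le_dist (i : Fin 4) (j : ZMod (2*k)) (x : Fin 4 × ZMod (2*k))
    (hr : (Sn (2*k)).Reachable x (i, j)) : pot k i j x ≤ (Sn (2*k)).dist x (i, j) := by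
  obtain ⟨p, hp⟩ := hr.exists_walk_length_eq_dist
  exact hp ▸ pot_le_length hk i j p

-- adjacency helpers
lemma adj_cyc (ℓ : Fin 4) (m : ZMod (2*k)) : (Sn (2*k)).Adj (ℓ, m) (ℓ, m+1) := by
  haveI : Fact (1 < 2*k) := ⟨by omega⟩
  refine SimpleGraph.fromRel_adj .. |>.2 ⟨?_, Or.inl (Or.inl ⟨rfl, rfl⟩)⟩
  simp only [ne_eq, Prod.mk.injEq, not_and]
  intro _ h
  exact one_ne_zero (by linear_combination -h : (1 : ZMod (2*k)) = 0)

lemma adj_ab (m : ZMod (2*k)) : (Sn (2*k)).Adj (0, m) (1, m) := by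
  refine SimpleGraph.fromRel_adj .. |>.2 ⟨by simp, Or.inl (Or.inr (Or.inl ⟨rfl, rfl, Or.inl rfl⟩))⟩

lemma adj_ab' (m : ZMod (2*k)) : (Sn (2*k)).Adj (0, m+1) (1, m) := by
  refine SimpleGraph.fromRel_adj .. |>.2 ⟨by simp, Or.inl (Or.inr (Or.inl ⟨rfl, rfl, Or.inr rfl⟩))⟩

lemma adj_bc (m : ZMod (2*k)) : (Sn (2*k)).Adj (1, m) (2, m) := by
  refine SimpleGraph.fromRel_adj .. |>.2 ⟨by simp, Or.inl (Or.inr (Or.inr (Or.inl ⟨rfl, rfl, rfl⟩)))⟩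

lemma adj_cd (m : ZMod (2*k)) : (Sn (2*k)).Adj (2, m) (3, m) := by
  refine SimpleGraph.fromRel_adj .. |>.2 ⟨by simp, Or.inl (Or.inr (Or.inr (Or.inr ⟨rfl, rfl, rfl⟩)))⟩

lemma sn_conn : (Sn (2*k)).Connected := by
  have base : ∀ s : ℕ, (Sn (2*k)).Reachable (0, (s : ZMod (2*k))) (0, 0) := by
    intro s
    induction s with
    | zero =>
      simp only [Nat.cast_zero]
      exact SimpleGraph.Reachable.refl _
    | succ t ih =>
      have e : ((t+1 : ℕ) : ZMod (2*k)) = (t : ZMod (2*k)) + 1 := by push_cast; ring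
      rw [e]
      exact ((adj_cyc hk 0 (t : ZMod (2*k))).symm.reachable).trans ih
  have all0 : ∀ m : ZMod (2*k), (Sn (2*k)).Reachable (0, m) (0, 0) := by
    intro m
    haveI : NeZero (2*k) := ⟨by omega⟩
    have : ((m.val : ℕ) : ZMod (2*k)) = m := by rw [ZMod.natCast_val, ZMod.cast_id]
    simpa [this] using base m.val
  have lay : ∀ x : Fin 4 × ZMod (2*k), (Sn (2*k)).Reachable x (0, x.2) := by
    rintro ⟨ℓ, m⟩
    fin_cases ℓ
    · rfl
    · exact (adj_ab hk m).symm.reachable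
    · exact ((adj_ab hk m).reachable.trans (adj_bc hk m).reachable).symm
    · exact (((adj_ab hk m).reachable.trans (adj_bc hk m).reachable).trans
        (adj_cd hk m).reachable).symm
  haveI : NeZero (2*k) := ⟨by omega⟩
  have pre : (Sn (2*k)).Preconnected :=
    fun x y => ((lay x).trans (all0 x.2)).trans (((lay y).trans (all0 y.2)).symm)
  exact SimpleGraph.Connected.mk pre

lemma dist_adj_le {x y : Fin 4 × ZMod (2*k)} (h : (Sn (2*k)).Adj x y) :
    (Sn (2*k)).dist x y ≤ 1 := by
  simpa using SimpleGraph.dist_le h.toWalk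

lemma dist_layer (ℓ : Fin 4) (m : ZMod (2*k)) (s : ℕ) :
    (Sn (2*k)).dist (ℓ, m + (s : ZMod (2*k))) (ℓ, m) ≤ s := by
  induction s with
  | zero => simp
  | succ t ih =>
    have tri := (sn_conn hk).dist_triangle
      (u := (ℓ, m + ((t+1 : ℕ) : ZMod (2*k)))) (v := (ℓ, m + (t : ZMod (2*k)))) (w := (ℓ, m))
    have step : (Sn (2*k)).dist (ℓ, m + ((t+1 : ℕ) : ZMod (2*k))) (ℓ, m + (t : ZMod (2*k))) ≤ 1 := by
      have : (m + ((t+1 : ℕ) : ZMod (2*k))) = (m + (t : ZMod (2*k))) + 1 := by push_cast; ring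
      rw [this, SimpleGraph.dist_comm]
      exact dist_adj_le hk (adj_cyc hk ℓ _)
    omega

lemma dist_down (i : Fin 4) (hi : i ≠ 0) (m : ZMod (2*k)) :
    (Sn (2*k)).dist (1, m) (i, m) ≤ i.val - 1 := by
  fin_cases i
  · exact absurd rfl hi
  · show (Sn (2*k)).dist (1, m) ((1 : Fin 4), m) ≤ (1 : Fin 4).val - 1
    simp
  · show (Sn (2*k)).dist (1, m) ((2 : Fin 4), m) ≤ (2 : Fin 4).val - 1
    simpa using dist_adj_le hk (adj_bc hk m)
  · show (Sn (2*k)).dist (1, m) ((3 : Fin 4), m) ≤ (3 : Fin 4).val - 1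
    have tri := (sn_conn hk).dist_triangle (u := ((1 : Fin 4), m)) (v := ((2 : Fin 4), m))
      (w := ((3 : Fin 4), m))
    have h1 := dist_adj_le hk (adj_bc hk m)
    have h2 := dist_adj_le hk (adj_cd hk m)
    have hv : (3 : Fin 4).val = 3 := rfl
    omega

lemma cyc_cast (a : ℕ) (h : a ≤ 2*k) : cyc k ((a : ℕ) : ZMod (2*k)) = min a (2*k - a) := by
  haveI : NeZero (2*k) := ⟨by omega⟩
  rcases Nat.lt_or_ge a (2*k) with h' | h'
  · rw [cyc, ZMod.val_cast_of_lt h']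
  · have : a = 2*k := by omega
    subst this
    rw [cyc, ZMod.natCast_self]
    simp [ZMod.val_zero]

lemma dist_eq_of (i : Fin 4) (j : ZMod (2*k)) (x : Fin 4 × ZMod (2*k)) (N : ℕ)
    (h1 : (Sn (2*k)).dist x (i, j) ≤ N) (h2 : N ≤ pot k i j x) :
    (Sn (2*k)).dist x (i, j) = N :=
  le_antisymm h1 (le_trans h2 (pot_le_dist hk i j x ((sn_conn hk).preconnected x (i, j))))

lemma case_far (hk2 : 2 ≤ k) (i : Fin 4) (hI : i ≠ 0) (j₁ : ZMod (2*k)) (e : ℕ)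
    (he1 : 1 ≤ e) (he2 : e ≤ k - 1) :
    ∃ u v, (Sn (2*k)).Adj u v ∧
      (Sn (2*k)).dist u (i, j₁) = (Sn (2*k)).dist v (i, j₁) ∧
      (Sn (2*k)).dist u (i, j₁ + (e : ℕ)) = (Sn (2*k)).dist v (i, j₁ + (e : ℕ)) := by
  set j₂ : ZMod (2*k) := j₁ + (e : ℕ) with hd
  have ht1 : 1 ≤ i.val := by
    rcases Nat.eq_zero_or_pos i.val with h | h
    · exact absurd (Fin.ext h) hI
    · exact h
  have ht4 : i.val < 4 := i.isLt
  set t := i.val with hT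
  refine ⟨((0 : Fin 4), j₂ + 1), ((1 : Fin 4), j₂ + 1), adj_ab hk _, ?_, ?_⟩
  · -- distances to (i, j₁) are both t + e
    have c1 : cyc k ((e : ℕ) : ZMod (2*k)) = e := by rw [cyc_cast hk e (by omega)]; omega
    have c2 : cyc k (((e+1 : ℕ)) : ZMod (2*k)) = e + 1 := by
      rw [cyc_cast hk (e+1) (by omega)]; omega
    have a1 : j₂ + 1 - j₁ = (((e+1 : ℕ)) : ZMod (2*k)) := by rw [hd]; push_cast; ring
    have a2 : j₂ + 1 - j₁ - 1 = ((e : ℕ) : ZMod (2*k)) := by rw [hd]; push_cast; ring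
    rw [dist_eq_of hk i j₁ _ (t + e) ?ub1 ?lb1, dist_eq_of hk i j₁ _ (t + e) ?ub2 ?lb2]
    case lb1 =>
      simp only [pot, hI, reduceIte, ite_false, ite_true]
      rw [a2, a1, c1, c2]
      omega
    case lb2 =>
      have hone : ¬((1 : Fin 4) = 0) := by decide
      simp only [pot, hI, hone, reduceIte, ite_false, ite_true]
      rw [a1, c2]
      have hv : (1 : Fin 4).val = 1 := rfl
      omega
    case ub1 =>
      have s1 : (Sn (2*k)).dist ((0:Fin 4), j₂ + 1) ((1:Fin 4), j₂) ≤ 1 :=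
        dist_adj_le hk (adj_ab' hk j₂)
      have s2 : (Sn (2*k)).dist ((1:Fin 4), j₂) ((1:Fin 4), j₁) ≤ e := by
        rw [hd]; exact dist_layer hk 1 j₁ e
      have s3 : (Sn (2*k)).dist ((1:Fin 4), j₁) (i, j₁) ≤ t - 1 := dist_down hk i hI j₁
      have t1 := (sn_conn hk).dist_triangle (u := ((0:Fin 4), j₂ + 1))
        (v := ((1:Fin 4), j₂)) (w := (i, j₁))
      have t2 := (sn_conn hk).dist_triangle (u := ((1:Fin 4), j₂))
        (v := ((1:Fin 4), j₁)) (w := (i, j₁))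
      omega
    case ub2 =>
      have a3 : j₂ + 1 = j₁ + (((e+1:ℕ)) : ZMod (2*k)) := by rw [hd]; push_cast; ring
      have s1 : (Sn (2*k)).dist ((1:Fin 4), j₂ + 1) ((1:Fin 4), j₁) ≤ e + 1 := by
        rw [a3]; exact dist_layer hk 1 j₁ (e+1)
      have s3 : (Sn (2*k)).dist ((1:Fin 4), j₁) (i, j₁) ≤ t - 1 := dist_down hk i hI j₁
      have t1 := (sn_conn hk).dist_triangle (u := ((1:Fin 4), j₂ + 1))
        (v := ((1:Fin 4), j₁)) (w := (i, j₁))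
      omega
  · -- distances to (i, j₂) are both t
    have c0 : cyc k ((0 : ℕ) : ZMod (2*k)) = 0 := by rw [cyc_cast hk 0 (by omega)]; omega
    have c1 : cyc k ((1 : ℕ) : ZMod (2*k)) = 1 := by rw [cyc_cast hk 1 (by omega)]; omega
    have a1 : j₂ + 1 - j₂ = ((1 : ℕ) : ZMod (2*k)) := by push_cast; ring
    have a2 : j₂ + 1 - j₂ - 1 = ((0 : ℕ) : ZMod (2*k)) := by push_cast; ring
    rw [dist_eq_of hk i j₂ _ t ?ub1 ?lb1, dist_eq_of hk i j₂ _ t ?ub2 ?lb2]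
    case lb1 =>
      simp only [pot, hI, reduceIte, ite_false, ite_true]
      rw [a2, a1, c1, c0]
      omega
    case lb2 =>
      have hone : ¬((1 : Fin 4) = 0) := by decide
      simp only [pot, hI, hone, reduceIte, ite_false, ite_true]
      rw [a1, c1]
      have hv : (1 : Fin 4).val = 1 := rfl
      omega
    case ub1 =>
      have s1 : (Sn (2*k)).dist ((0:Fin 4), j₂ + 1) ((1:Fin 4), j₂) ≤ 1 :=
        dist_adj_le hk (adj_ab' hk j₂)
      have s3 : (Sn (2*k)).dist ((1:Fin 4), j₂) (i, j₂) ≤ t - 1 := dist_down hk i hI j₂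
      have t1 := (sn_conn hk).dist_triangle (u := ((0:Fin 4), j₂ + 1))
        (v := ((1:Fin 4), j₂)) (w := (i, j₂))
      omega
    case ub2 =>
      have s1 : (Sn (2*k)).dist ((1:Fin 4), j₂ + 1) ((1:Fin 4), j₂) ≤ 1 := by
        rw [SimpleGraph.dist_comm]
        exact dist_adj_le hk (adj_cyc hk 1 j₂)
      have s3 : (Sn (2*k)).dist ((1:Fin 4), j₂) (i, j₂) ≤ t - 1 := dist_down hk i hI j₂
      have t1 := (sn_conn hk).dist_triangle (u := ((1:Fin 4), j₂ + 1))
        (v := ((1:Fin 4), j₂)) (w := (i, j₂))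
      omega

lemma case_far0 (j₁ : ZMod (2*k)) (e g : ℕ) (he1 : 1 ≤ e) (hg : e + g + 1 = k) :
    ∃ u v, (Sn (2*k)).Adj u v ∧
      (Sn (2*k)).dist u ((0 : Fin 4), j₁) = (Sn (2*k)).dist v ((0 : Fin 4), j₁) ∧
      (Sn (2*k)).dist u ((0 : Fin 4), j₁ + (e : ℕ)) =
        (Sn (2*k)).dist v ((0 : Fin 4), j₁ + (e : ℕ)) := by
  have h2k : ((2*k : ℕ) : ZMod (2*k)) = 0 := ZMod.natCast_self _
  have hgc : ((e : ℕ) : ZMod (2*k)) + ((g : ℕ) : ZMod (2*k)) + 1 = ((k : ℕ) : ZMod (2*k)) := by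
    have := congrArg (fun x : ℕ => ((x : ℕ) : ZMod (2*k))) hg
    push_cast at this
    linear_combination this
  push_cast at h2k
  set j₂ : ZMod (2*k) := j₁ + (e : ℕ) with hd
  set m : ZMod (2*k) := j₂ + ((k : ℕ) : ZMod (2*k)) with hm
  have hz : ¬((1 : Fin 4) = 0) := by decide
  refine ⟨((0 : Fin 4), m), ((1 : Fin 4), m), adj_ab hk _, ?_, ?_⟩
  · -- distances to (0, j₁) are both g + 1
    have a4 : m - j₁ = (((k+e : ℕ)) : ZMod (2*k)) := by rw [hm, hd]; push_cast; ring
    have a5 : m - j₁ + 1 = (((k+e+1 : ℕ)) : ZMod (2*k)) := by rw [hm, hd]; push_cast; ring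
    rw [dist_eq_of hk 0 j₁ _ (g+1) ?ub1 ?lb1, dist_eq_of hk 0 j₁ _ (g+1) ?ub2 ?lb2]
    case lb1 =>
      simp only [pot, reduceIte, ite_true]
      rw [a4, cyc_cast hk _ (by omega)]
      omega
    case lb2 =>
      simp only [pot, hz, reduceIte, ite_false, ite_true]
      rw [a5, a4, cyc_cast hk _ (by omega), cyc_cast hk _ (by omega)]
      omega
    case ub1 =>
      have a6 : m + (((g+1 : ℕ)) : ZMod (2*k)) = j₁ := by
        rw [hm, hd]; push_cast; linear_combination h2k + hgc
      have s := dist_layer hk 0 m (g+1)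
      rw [a6] at s
      rw [SimpleGraph.dist_comm]
      exact s
    case ub2 =>
      have s1 : (Sn (2*k)).dist ((1:Fin 4), m) ((0:Fin 4), m + 1) ≤ 1 := by
        rw [SimpleGraph.dist_comm]; exact dist_adj_le hk (adj_ab' hk m)
      have a7 : (m + 1) + ((g : ℕ) : ZMod (2*k)) = j₁ := by
        rw [hm, hd]; push_cast; linear_combination h2k + hgc
      have s2 := dist_layer hk 0 (m+1) g
      rw [a7] at s2
      rw [SimpleGraph.dist_comm] at s2
      have t1 := (sn_conn hk).dist_triangle (u := ((1:Fin 4), m))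
        (v := ((0:Fin 4), m + 1)) (w := ((0:Fin 4), j₁))
      omega
  · -- distances to (0, j₂) are both k
    have a1 : m - j₂ = ((k : ℕ) : ZMod (2*k)) := by rw [hm]; ring
    have a2 : m - j₂ + 1 = (((k+1 : ℕ)) : ZMod (2*k)) := by rw [hm]; push_cast; ring
    rw [dist_eq_of hk 0 j₂ _ k ?ub1 ?lb1, dist_eq_of hk 0 j₂ _ k ?ub2 ?lb2]
    case lb1 =>
      simp only [pot, reduceIte, ite_true]
      rw [a1, cyc_cast hk _ (by omega)]
      omega
    case lb2 =>
      simp only [pot, hz, reduceIte, ite_false, ite_true]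
      rw [a2, a1, cyc_cast hk _ (by omega), cyc_cast hk _ (by omega)]
      omega
    case ub1 =>
      exact dist_layer hk 0 j₂ k
    case ub2 =>
      have s1 : (Sn (2*k)).dist ((1:Fin 4), m) ((0:Fin 4), m + 1) ≤ 1 := by
        rw [SimpleGraph.dist_comm]; exact dist_adj_le hk (adj_ab' hk m)
      have a3 : (m + 1) + (((e+g : ℕ)) : ZMod (2*k)) = j₂ := by
        rw [hm]; push_cast; linear_combination h2k + hgc
      have s2 := dist_layer hk 0 (m+1) (e+g)
      rw [a3] at s2
      rw [SimpleGraph.dist_comm] at s2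
      have t1 := (sn_conn hk).dist_triangle (u := ((1:Fin 4), m))
        (v := ((0:Fin 4), m + 1)) (w := ((0:Fin 4), j₂))
      omega

lemma case_anti (i : Fin 4) (hI : i ≠ 0) (j₁ : ZMod (2*k)) (K : ℕ) (hK : K + 1 = k) :
    ∃ u v, (Sn (2*k)).Adj u v ∧
      (Sn (2*k)).dist u (i, j₁) = (Sn (2*k)).dist v (i, j₁) ∧
      (Sn (2*k)).dist u (i, j₁ + (k : ℕ)) = (Sn (2*k)).dist v (i, j₁ + (k : ℕ)) := by
  have h2k : ((2*k : ℕ) : ZMod (2*k)) = 0 := ZMod.natCast_self _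
  have hKc : ((K : ℕ) : ZMod (2*k)) + 1 = ((k : ℕ) : ZMod (2*k)) := by
    have := congrArg (fun x : ℕ => ((x : ℕ) : ZMod (2*k))) hK
    push_cast at this
    linear_combination this
  push_cast at h2k
  have ht1 : 1 ≤ i.val := by
    rcases Nat.eq_zero_or_pos i.val with h | h
    · exact absurd (Fin.ext h) hI
    · exact h
  have ht4 : i.val < 4 := i.isLt
  set j₂ : ZMod (2*k) := j₁ + ((k : ℕ) : ZMod (2*k)) with hd
  refine ⟨((0 : Fin 4), j₁), ((0 : Fin 4), j₁ + 1), adj_cyc hk 0 j₁, ?_, ?_⟩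
  · -- distances to (i, j₁) are both i.val
    have a1 : j₁ - j₁ = ((0 : ℕ) : ZMod (2*k)) := by push_cast; ring
    have a2 : j₁ - j₁ - 1 = (((K + k : ℕ)) : ZMod (2*k)) := by
      push_cast; linear_combination -hKc - h2k
    have a3 : j₁ + 1 - j₁ = ((1 : ℕ) : ZMod (2*k)) := by push_cast; ring
    have a4 : j₁ + 1 - j₁ - 1 = ((0 : ℕ) : ZMod (2*k)) := by push_cast; ring
    rw [dist_eq_of hk i j₁ _ i.val ?ub1 ?lb1, dist_eq_of hk i j₁ _ i.val ?ub2 ?lb2]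
    case lb1 =>
      simp only [pot, hI, reduceIte, ite_false, ite_true]
      rw [a2, a1, cyc_cast hk _ (by omega), cyc_cast hk _ (by omega)]
      omega
    case lb2 =>
      simp only [pot, hI, reduceIte, ite_false, ite_true]
      rw [a4, a3, cyc_cast hk _ (by omega), cyc_cast hk _ (by omega)]
      omega
    case ub1 =>
      have s1 : (Sn (2*k)).dist ((0:Fin 4), j₁) ((1:Fin 4), j₁) ≤ 1 :=
        dist_adj_le hk (adj_ab hk j₁)
      have s2 : (Sn (2*k)).dist ((1:Fin 4), j₁) (i, j₁) ≤ i.val - 1 := dist_down hk i hI j₁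
      have t1 := (sn_conn hk).dist_triangle (u := ((0:Fin 4), j₁))
        (v := ((1:Fin 4), j₁)) (w := (i, j₁))
      omega
    case ub2 =>
      have s1 : (Sn (2*k)).dist ((0:Fin 4), j₁ + 1) ((1:Fin 4), j₁) ≤ 1 :=
        dist_adj_le hk (adj_ab' hk j₁)
      have s2 : (Sn (2*k)).dist ((1:Fin 4), j₁) (i, j₁) ≤ i.val - 1 := dist_down hk i hI j₁
      have t1 := (sn_conn hk).dist_triangle (u := ((0:Fin 4), j₁ + 1))
        (v := ((1:Fin 4), j₁)) (w := (i, j₁))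
      omega
  · -- distances to (i, j₂) are both i.val + K
    have a1 : j₁ - j₂ = ((k : ℕ) : ZMod (2*k)) := by rw [hd]; push_cast; linear_combination -h2k
    have a2 : j₁ - j₂ - 1 = ((K : ℕ) : ZMod (2*k)) := by
      rw [hd]; push_cast; linear_combination -hKc - h2k
    have a3 : j₁ + 1 - j₂ = (((k+1 : ℕ)) : ZMod (2*k)) := by
      rw [hd]; push_cast; linear_combination -h2k
    have a4 : j₁ + 1 - j₂ - 1 = ((k : ℕ) : ZMod (2*k)) := by
      rw [hd]; push_cast; linear_combination -h2k
    rw [dist_eq_of hk i j₂ _ (i.val + K) ?ub1 ?lb1, dist_eq_of hk i j₂ _ (i.val + K) ?ub2 ?lb2]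
    case lb1 =>
      simp only [pot, hI, reduceIte, ite_false, ite_true]
      rw [a2, a1, cyc_cast hk _ (by omega), cyc_cast hk _ (by omega)]
      omega
    case lb2 =>
      simp only [pot, hI, reduceIte, ite_false, ite_true]
      rw [a4, a3, cyc_cast hk _ (by omega), cyc_cast hk _ (by omega)]
      omega
    case ub1 =>
      have e1 : j₁ - 1 + 1 = j₁ := by ring
      have s1 : (Sn (2*k)).dist ((0:Fin 4), j₁) ((1:Fin 4), j₁ - 1) ≤ 1 := by
        have := adj_ab' hk (j₁ - 1)
        rw [e1] at this
        exact dist_adj_le hk this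
      have a5 : j₂ + ((K : ℕ) : ZMod (2*k)) = j₁ - 1 := by
        rw [hd]; push_cast; linear_combination hKc + h2k
      have s2 := dist_layer hk 1 j₂ K
      rw [a5] at s2
      have s3 : (Sn (2*k)).dist ((1:Fin 4), j₂) (i, j₂) ≤ i.val - 1 := dist_down hk i hI j₂
      have t1 := (sn_conn hk).dist_triangle (u := ((0:Fin 4), j₁))
        (v := ((1:Fin 4), j₁ - 1)) (w := (i, j₂))
      have t2 := (sn_conn hk).dist_triangle (u := ((1:Fin 4), j₁ - 1))
        (v := ((1:Fin 4), j₂)) (w := (i, j₂))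
      omega
    case ub2 =>
      have s1 : (Sn (2*k)).dist ((0:Fin 4), j₁ + 1) ((1:Fin 4), j₁ + 1) ≤ 1 :=
        dist_adj_le hk (adj_ab hk (j₁ + 1))
      have a5 : (j₁ + 1) + ((K : ℕ) : ZMod (2*k)) = j₂ := by
        rw [hd]; push_cast; linear_combination hKc
      have s2 := dist_layer hk 1 (j₁ + 1) K
      rw [a5] at s2
      rw [SimpleGraph.dist_comm] at s2
      have s3 : (Sn (2*k)).dist ((1:Fin 4), j₂) (i, j₂) ≤ i.val - 1 := dist_down hk i hI j₂
      have t1 := (sn_conn hk).dist_triangle (u := ((0:Fin 4), j₁ + 1))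
        (v := ((1:Fin 4), j₁ + 1)) (w := (i, j₂))
      have t2 := (sn_conn hk).dist_triangle (u := ((1:Fin 4), j₁ + 1))
        (v := ((1:Fin 4), j₂)) (w := (i, j₂))
      omega

lemma case_anti0 (j₁ : ZMod (2*k)) (K : ℕ) (hK : K + 1 = k) :
    ∃ u v, (Sn (2*k)).Adj u v ∧
      (Sn (2*k)).dist u ((0 : Fin 4), j₁) = (Sn (2*k)).dist v ((0 : Fin 4), j₁) ∧
      (Sn (2*k)).dist u ((0 : Fin 4), j₁ + (k : ℕ)) =
        (Sn (2*k)).dist v ((0 : Fin 4), j₁ + (k : ℕ)) := by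
  have h2k : ((2*k : ℕ) : ZMod (2*k)) = 0 := ZMod.natCast_self _
  have hKc : ((K : ℕ) : ZMod (2*k)) + 1 = ((k : ℕ) : ZMod (2*k)) := by
    have := congrArg (fun x : ℕ => ((x : ℕ) : ZMod (2*k))) hK
    push_cast at this
    linear_combination this
  push_cast at h2k
  set j₂ : ZMod (2*k) := j₁ + ((k : ℕ) : ZMod (2*k)) with hd
  have hz : ¬((1 : Fin 4) = 0) := by decide
  have e1 : j₁ - 1 + 1 = j₁ := by ring
  have huv : (Sn (2*k)).Adj ((1:Fin 4), j₁ - 1) ((1:Fin 4), j₁) := by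
    have := adj_cyc hk 1 (j₁ - 1)
    rwa [e1] at this
  refine ⟨((1 : Fin 4), j₁ - 1), ((1 : Fin 4), j₁), huv, ?_, ?_⟩
  · -- distances to (0, j₁) are both 1
    have a1 : j₁ - 1 - j₁ = (((K + k : ℕ)) : ZMod (2*k)) := by
      push_cast; linear_combination -hKc - h2k
    have a2 : j₁ - 1 - j₁ + 1 = ((0 : ℕ) : ZMod (2*k)) := by push_cast; ring
    have a3 : j₁ - j₁ = ((0 : ℕ) : ZMod (2*k)) := by push_cast; ring
    have a4 : j₁ - j₁ + 1 = ((1 : ℕ) : ZMod (2*k)) := by push_cast; ring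
    rw [dist_eq_of hk 0 j₁ _ 1 ?ub1 ?lb1, dist_eq_of hk 0 j₁ _ 1 ?ub2 ?lb2]
    case lb1 =>
      simp only [pot, hz, reduceIte, ite_false, ite_true]
      rw [a2, a1, cyc_cast hk _ (by omega), cyc_cast hk _ (by omega)]
      omega
    case lb2 =>
      simp only [pot, hz, reduceIte, ite_false, ite_true]
      rw [a4, a3, cyc_cast hk _ (by omega), cyc_cast hk _ (by omega)]
      omega
    case ub1 =>
      have := adj_ab' hk (j₁ - 1)
      rw [e1] at this
      rw [SimpleGraph.dist_comm]
      exact dist_adj_le hk this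
    case ub2 =>
      rw [SimpleGraph.dist_comm]
      exact dist_adj_le hk (adj_ab hk j₁)
  · -- distances to (0, j₂) are both k
    have a1 : j₁ - 1 - j₂ = ((K : ℕ) : ZMod (2*k)) := by
      rw [hd]; push_cast; linear_combination -hKc - h2k
    have a2 : j₁ - 1 - j₂ + 1 = ((k : ℕ) : ZMod (2*k)) := by
      rw [hd]; push_cast; linear_combination -h2k
    have a3 : j₁ - j₂ = ((k : ℕ) : ZMod (2*k)) := by
      rw [hd]; push_cast; linear_combination -h2k
    have a4 : j₁ - j₂ + 1 = (((k+1 : ℕ)) : ZMod (2*k)) := by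
      rw [hd]; push_cast; linear_combination -h2k
    rw [dist_eq_of hk 0 j₂ _ k ?ub1 ?lb1, dist_eq_of hk 0 j₂ _ k ?ub2 ?lb2]
    case lb1 =>
      simp only [pot, hz, reduceIte, ite_false, ite_true]
      rw [a2, a1, cyc_cast hk _ (by omega), cyc_cast hk _ (by omega)]
      omega
    case lb2 =>
      simp only [pot, hz, reduceIte, ite_false, ite_true]
      rw [a4, a3, cyc_cast hk _ (by omega), cyc_cast hk _ (by omega)]
      omega
    case ub1 =>
      have s1 : (Sn (2*k)).dist ((1:Fin 4), j₁ - 1) ((0:Fin 4), j₁ - 1) ≤ 1 := by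
        rw [SimpleGraph.dist_comm]
        exact dist_adj_le hk (adj_ab hk (j₁ - 1))
      have a5 : j₂ + ((K : ℕ) : ZMod (2*k)) = j₁ - 1 := by
        rw [hd]; push_cast; linear_combination hKc + h2k
      have s2 := dist_layer hk 0 j₂ K
      rw [a5] at s2
      have t1 := (sn_conn hk).dist_triangle (u := ((1:Fin 4), j₁ - 1))
        (v := ((0:Fin 4), j₁ - 1)) (w := ((0:Fin 4), j₂))
      omega
    case ub2 =>
      have s1 : (Sn (2*k)).dist ((1:Fin 4), j₁) ((0:Fin 4), j₁ + 1) ≤ 1 := by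
        rw [SimpleGraph.dist_comm]
        exact dist_adj_le hk (adj_ab' hk j₁)
      have a5 : (j₁ + 1) + ((K : ℕ) : ZMod (2*k)) = j₂ := by
        rw [hd]; push_cast; linear_combination hKc
      have s2 := dist_layer hk 0 (j₁ + 1) K
      rw [a5] at s2
      rw [SimpleGraph.dist_comm] at s2
      have t1 := (sn_conn hk).dist_triangle (u := ((1:Fin 4), j₁))
        (v := ((0:Fin 4), j₁ + 1)) (w := ((0:Fin 4), j₂))
      omega

lemma pair_exists (hk2 : 2 ≤ k) (i : Fin 4) (j₁ : ZMod (2*k)) (e : ℕ)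
    (he1 : 1 ≤ e) (he2 : e ≤ k) :
    ∃ u v, (Sn (2*k)).Adj u v ∧
      (Sn (2*k)).dist u (i, j₁) = (Sn (2*k)).dist v (i, j₁) ∧
      (Sn (2*k)).dist u (i, j₁ + (e : ℕ)) = (Sn (2*k)).dist v (i, j₁ + (e : ℕ)) := by
  by_cases hI : i = 0
  · subst hI
    rcases eq_or_lt_of_le he2 with he | he
    · have h := case_anti0 hk j₁ (k - 1) (by omega)
      rwa [show ((k : ℕ) : ZMod (2*k)) = ((e : ℕ) : ZMod (2*k)) from by rw [he]] at h
    · obtain ⟨g, hg⟩ : ∃ g, e + g + 1 = k := ⟨k - e - 1, by omega⟩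
      exact case_far0 hk j₁ e g he1 hg
  · rcases eq_or_lt_of_le he2 with he | he
    · have h := case_anti hk i hI j₁ (k - 1) (by omega)
      rwa [show ((k : ℕ) : ZMod (2*k)) = ((e : ℕ) : ZMod (2*k)) from by rw [he]] at h
    · exact case_far hk hk2 i hI j₁ e he1 (by omega)

end


theorem no_same_cycle_pair_local_resolving_Sn_even (k : ℕ) (hk : 2 ≤ k)
    (i : Fin 4) (j₁ j₂ : ZMod (2 * k)) (hj : j₁ ≠ j₂) :
    ¬ IsLocalResolvingSet (Sn (2 * k)) {(i, j₁), (i, j₂)} := by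
  intro hres
  haveI : NeZero (2*k) := ⟨by omega⟩
  have hk1 : 1 ≤ k := by omega
  have key : ∀ a b : ZMod (2*k), a + (((b - a).val : ℕ) : ZMod (2*k)) = b := by
    intro a b
    rw [ZMod.natCast_val, ZMod.cast_id]
    ring
  have he0 : j₂ - j₁ ≠ 0 := sub_ne_zero.mpr (Ne.symm hj)
  set e := (j₂ - j₁).val with hedef
  have he1 : 1 ≤ e := Nat.pos_of_ne_zero (fun h => he0 (by rwa [ZMod.val_eq_zero] at h))
  have helt : e < 2*k := ZMod.val_lt _
  have finish : ∀ u v : Fin 4 × ZMod (2*k), (Sn (2*k)).Adj u v →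
      (Sn (2*k)).dist u (i, j₁) = (Sn (2*k)).dist v (i, j₁) →
      (Sn (2*k)).dist u (i, j₂) = (Sn (2*k)).dist v (i, j₂) → False := by
    intro u v huv h1 h2
    obtain ⟨w, hw, hne⟩ := hres u v huv
    simp only [Set.mem_insert_iff, Set.mem_singleton_iff] at hw
    rcases hw with rfl | rfl
    · exact hne h1
    · exact hne h2
  rcases le_or_gt e k with hek | hek
  · obtain ⟨u, v, huv, h1, h2⟩ := pair_exists hk1 hk i j₁ e he1 hek
    rw [key j₁ j₂] at h2
    exact finish u v huv h1 h2
  · have hneg : j₁ - j₂ = -(j₂ - j₁) := by ring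
    have hval : (j₁ - j₂).val = 2*k - e := by
      rw [hneg, ZMod.neg_val, if_neg he0]
    obtain ⟨u, v, huv, h1, h2⟩ := pair_exists hk1 hk i j₂ ((j₁ - j₂).val)
      (by omega) (by omega)
    rw [key j₂ j₁] at h2
    exact finish u v huv h2 h1
end

section
/- For n = 2k+1 with k ≥ 1, the set {d_1, d_2, …, d_n} is a strong resolving set of S_n. -/
namespace SnAux

open SimpleGraph

variable {n : ℕ}

/-! ### circular distance -/

/-- circular distance on `ZMod n` -/
def cdist (i j : ZMod n) : ℕ := min (j - i).val (i - j).val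

lemma cdist_comm (i j : ZMod n) : cdist i j = cdist j i := min_comm _ _

lemma cdist_self (i : ZMod n) : cdist i i = 0 := by
  simp [cdist]

lemma cdist_add [NeZero n] (i : ZMod n) (c : ℕ) (hc : c < n) :
    cdist i (i + (c : ZMod n)) = min c (n - c) := by
  have h1 : i + (c : ZMod n) - i = (c : ZMod n) := by ring
  have h2 : i - (i + (c : ZMod n)) = -(c : ZMod n) := by ring
  rw [cdist, h1, h2, ZMod.neg_val]
  split_ifs with h
  · have hc0 : c = 0 := by
      have := congrArg ZMod.val h
      rwa [ZMod.val_cast_of_lt hc, ZMod.val_zero] at this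
    subst hc0; simp
  · rw [ZMod.val_cast_of_lt hc]

lemma cdist_sub [NeZero n] (i : ZMod n) (c : ℕ) (hc : c < n) :
    cdist i (i - (c : ZMod n)) = min c (n - c) := by
  have := cdist_add (i - (c : ZMod n)) c hc
  rw [sub_add_cancel] at this
  rw [cdist_comm]; exact this

/-! ### Lipschitz property of circular distance -/

lemma F_lip [NeZero n] (hn : 2 ≤ n) (z : ZMod n) :
    min z.val (-z).val ≤ min (z + 1).val (-(z + 1)).val + 1 := by
  by_cases hz : z = 0
  · subst hz; simp
  by_cases hz1 : z + 1 = 0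
  · have hz2 : -z = 1 := by
      have := congrArg (fun w => w - z) hz1
      simpa [sub_eq_add_neg] using this.symm
    have : (-z).val = 1 := by
      rw [hz2, ZMod.val_one'' (by omega)]
    have hm := min_le_right z.val (-z).val
    omega
  · have ha : z.val < n := ZMod.val_lt z
    have ha0 : z.val ≠ 0 := fun h => hz ((ZMod.val_eq_zero z).mp h)
    have h4 : (z + 1).val ≠ 0 := fun h => hz1 ((ZMod.val_eq_zero _).mp h)
    have h1 : (z + 1).val = (z.val + 1) % n := by
      rw [ZMod.val_add, ZMod.val_one'' (by omega)]
    have h2 : (-z).val = n - z.val := by rw [ZMod.neg_val, if_neg hz]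
    have h3 : (-(z + 1)).val = n - (z + 1).val := by rw [ZMod.neg_val, if_neg hz1]
    have h5 : z.val + 1 < n ∨ z.val + 1 = n := by omega
    rcases h5 with h5 | h5
    · rw [Nat.mod_eq_of_lt h5] at h1
      omega
    · rw [h5, Nat.mod_self] at h1
      exact absurd h1 h4

lemma F_lip' [NeZero n] (hn : 2 ≤ n) (z : ZMod n) :
    min (z + 1).val (-(z + 1)).val ≤ min z.val (-z).val + 1 := by
  have h := F_lip hn (-(z + 1))
  rw [show -(z + 1) + 1 = -z by ring] at h
  simp only [neg_neg] at h
  omega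

lemma cdist_lip [NeZero n] (hn : 2 ≤ n) (i j : ZMod n) :
    cdist i j ≤ cdist (i + 1) j + 1 ∧ cdist (i + 1) j ≤ cdist i j + 1 := by
  have e1 : j - i = (j - (i + 1)) + 1 := by ring
  have e2 : i - j = -((j - (i + 1)) + 1) := by ring
  have e3 : (i + 1) - j = -(j - (i + 1)) := by ring
  unfold cdist
  rw [e1, e2, e3]
  exact ⟨F_lip' hn _, F_lip hn _⟩

/-! ### the potential function -/

/-- Exact distance to `d_j`, used as a Lipschitz lower bound. -/
def psi (j : ZMod n) (x : Fin 4 × ZMod n) : ℕ :=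
  if x.1 = 0 then 3 + min (cdist x.2 j) (cdist (x.2 - 1) j)
  else (3 - x.1.val) + cdist x.2 j

lemma psi_lip [NeZero n] (hn : 2 ≤ n) (j : ZMod n) {x y : Fin 4 × ZMod n}
    (h : snRel n x y) : psi j x ≤ psi j y + 1 ∧ psi j y ≤ psi j x + 1 := by
  obtain ⟨ℓx, ix⟩ := x
  obtain ⟨ℓy, iy⟩ := y
  rcases h with ⟨hl, hi⟩ | ⟨hx, hy, hi⟩ | ⟨hx, hy, hi⟩ | ⟨hx, hy, hi⟩
  · -- same layer, iy = ix + 1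
    simp only at hl hi
    subst hl; subst hi
    have l1 := cdist_lip hn ix j
    have l2 := cdist_lip hn (ix - 1) j
    rw [sub_add_cancel] at l2
    by_cases h0 : ℓx = 0
    · subst h0
      simp only [psi, if_pos rfl, add_sub_cancel_right, if_true, eq_self_iff_true]
      rcases min_cases (cdist ix j) (cdist (ix - 1) j) with ⟨e1, e2⟩ | ⟨e1, e2⟩ <;>
        rcases min_cases (cdist (ix + 1) j) (cdist ix j) with ⟨e3, e4⟩ | ⟨e3, e4⟩ <;> omega
    · simp only [psi, if_neg h0]
      omega
  · -- a-b edges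
    simp only at hx hy hi
    subst hx; subst hy
    have l2 := cdist_lip hn (ix - 1) j
    rw [sub_add_cancel] at l2
    have hne : ((1 : Fin 4) = 0) = False := by decide
    simp only [psi, hne, if_false, if_neg (by decide : ¬(1 : Fin 4) = 0),
      eq_self_iff_true, if_true]
    have hv1 : ((1 : Fin 4).val) = 1 := rfl
    rw [hv1]
    rcases hi with h | h
    · subst h
      rcases min_cases (cdist ix j) (cdist (ix - 1) j) with ⟨e1, e2⟩ | ⟨e1, e2⟩ <;> omega
    · have hiy : iy = ix - 1 := by rw [h]; ring
      subst hiy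
      rcases min_cases (cdist ix j) (cdist (ix - 1) j) with ⟨e1, e2⟩ | ⟨e1, e2⟩ <;> omega
  · -- b-c
    simp only at hx hy hi
    subst hx; subst hy; subst hi
    simp only [psi, if_neg (by decide : ¬(1 : Fin 4) = 0), if_neg (by decide : ¬(2 : Fin 4) = 0)]
    have h1 : ((1 : Fin 4).val) = 1 := rfl
    have h2 : ((2 : Fin 4).val) = 2 := rfl
    rw [h1, h2]
    omega
  · -- c-d
    simp only at hx hy hi
    subst hx; subst hy; subst hi
    simp only [psi, if_neg (by decide : ¬(2 : Fin 4) = 0), if_neg (by decide : ¬(3 : Fin 4) = 0)]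
    have h1 : ((2 : Fin 4).val) = 2 := rfl
    have h2 : ((3 : Fin 4).val) = 3 := rfl
    rw [h1, h2]
    omega

lemma psi_le_length [NeZero n] (hn : 2 ≤ n) (j : ZMod n) :
    ∀ {x y : Fin 4 × ZMod n} (w : (Sn n).Walk x y), psi j x ≤ psi j y + w.length := by
  intro x y w
  induction w with
  | nil => simp
  | @cons a b c h p ih =>
    have h' : snRel n a b ∨ snRel n b a := by
      have := h
      rw [Sn, SimpleGraph.fromRel_adj] at this
      exact this.2
    have hab : psi j a ≤ psi j b + 1 := by
      rcases h' with h' | h'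
      · exact (psi_lip hn j h').1
      · exact (psi_lip hn j h').2
    simp only [SimpleGraph.Walk.length_cons]
    omega

lemma psi_le_dist [NeZero n] (hn : 2 ≤ n) {x : Fin 4 × ZMod n} {j : ZMod n}
    (hr : (Sn n).Reachable x (3, j)) : psi j x ≤ (Sn n).dist x (3, j) := by
  obtain ⟨w, hw⟩ := hr.exists_walk_length_eq_dist
  have h1 := psi_le_length hn j w
  have h2 : psi j (3, j) = 0 := by
    simp only [psi, if_neg (by decide : ¬(3 : Fin 4) = 0)]
    rw [cdist_self]
    rfl
  omega

/-! ### adjacency and short walks -/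

lemma sn_adj {x y : Fin 4 × ZMod n} (hne : x ≠ y) (h : snRel n x y) : (Sn n).Adj x y := by
  rw [Sn, SimpleGraph.fromRel_adj]
  exact ⟨hne, Or.inl h⟩

lemma adj_h (h1 : (1 : ZMod n) ≠ 0) (ℓ : Fin 4) (i : ZMod n) :
    (Sn n).Adj (ℓ, i) (ℓ, i + 1) := by
  apply sn_adj
  · intro h
    have := (Prod.ext_iff.mp h).2
    simp only at this
    exact h1 (by linear_combination -this)
  · exact Or.inl ⟨rfl, rfl⟩

lemma adj_ab (i : ZMod n) : (Sn n).Adj (0, i) (1, i) := by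
  apply sn_adj
  · intro h
    have h2 : (0 : Fin 4) = 1 := (Prod.ext_iff.mp h).1
    exact absurd h2 (by decide)
  · exact Or.inr (Or.inl ⟨rfl, rfl, Or.inl rfl⟩)

lemma adj_ab' (i : ZMod n) : (Sn n).Adj (0, i) (1, i - 1) := by
  apply sn_adj
  · intro h
    have h2 : (0 : Fin 4) = 1 := (Prod.ext_iff.mp h).1
    exact absurd h2 (by decide)
  · exact Or.inr (Or.inl ⟨rfl, rfl, Or.inr (by ring_nf)⟩)

lemma adj_bc (i : ZMod n) : (Sn n).Adj (1, i) (2, i) := by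
  apply sn_adj
  · intro h
    have h2 : (1 : Fin 4) = 2 := (Prod.ext_iff.mp h).1
    exact absurd h2 (by decide)
  · exact Or.inr (Or.inr (Or.inl ⟨rfl, rfl, rfl⟩))

lemma adj_cd (i : ZMod n) : (Sn n).Adj (2, i) (3, i) := by
  apply sn_adj
  · intro h
    have h2 : (2 : Fin 4) = 3 := (Prod.ext_iff.mp h).1
    exact absurd h2 (by decide)
  · exact Or.inr (Or.inr (Or.inr ⟨rfl, rfl, rfl⟩))

/-- `DLe x y t`: there is a walk from `x` to `y` of length at most `t`. -/
def DLe (n : ℕ) (x y : Fin 4 × ZMod n) (t : ℕ) : Prop :=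
  ∃ w : (Sn n).Walk x y, w.length ≤ t

lemma DLe.refl (x : Fin 4 × ZMod n) : DLe n x x 0 := ⟨SimpleGraph.Walk.nil, le_rfl⟩

lemma DLe.of_adj {x y : Fin 4 × ZMod n} (h : (Sn n).Adj x y) : DLe n x y 1 :=
  ⟨h.toWalk, le_rfl⟩

lemma DLe.trans {x y z : Fin 4 × ZMod n} {s t : ℕ} (h1 : DLe n x y s) (h2 : DLe n y z t) :
    DLe n x z (s + t) := by
  obtain ⟨w1, hw1⟩ := h1
  obtain ⟨w2, hw2⟩ := h2
  exact ⟨w1.append w2, by rw [SimpleGraph.Walk.length_append]; omega⟩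

lemma DLe.symm {x y : Fin 4 × ZMod n} {t : ℕ} (h : DLe n x y t) : DLe n y x t := by
  obtain ⟨w, hw⟩ := h
  exact ⟨w.reverse, by rwa [SimpleGraph.Walk.length_reverse]⟩

lemma DLe.dist_le {x y : Fin 4 × ZMod n} {t : ℕ} (h : DLe n x y t) : (Sn n).dist x y ≤ t := by
  obtain ⟨w, hw⟩ := h
  exact le_trans (SimpleGraph.dist_le w) hw

lemma DLe.reachable {x y : Fin 4 × ZMod n} {t : ℕ} (h : DLe n x y t) : (Sn n).Reachable x y := by
  obtain ⟨w, _⟩ := h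
  exact ⟨w⟩

lemma dle_add (h1 : (1 : ZMod n) ≠ 0) (ℓ : Fin 4) (i : ZMod n) (t : ℕ) :
    DLe n (ℓ, i) (ℓ, i + (t : ZMod n)) t := by
  induction t with
  | zero => simpa using DLe.refl (ℓ, i)
  | succ t ih =>
    have step := DLe.of_adj (adj_h h1 ℓ (i + (t : ZMod n)))
    have := ih.trans step
    have e : i + (t : ZMod n) + 1 = i + ((t + 1 : ℕ) : ZMod n) := by push_cast; ring
    rwa [e] at this

lemma dle_sub (h1 : (1 : ZMod n) ≠ 0) (ℓ : Fin 4) (i : ZMod n) (t : ℕ) :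
    DLe n (ℓ, i) (ℓ, i - (t : ZMod n)) t := by
  have := (dle_add h1 ℓ (i - (t : ZMod n)) t).symm
  rwa [sub_add_cancel] at this

lemma dle_down1 (i : ZMod n) : DLe n (1, i) (3, i) 2 :=
  (DLe.of_adj (adj_bc i)).trans (DLe.of_adj (adj_cd i))

lemma dle_down2 (i : ZMod n) : DLe n (2, i) (3, i) 1 := DLe.of_adj (adj_cd i)

/-- go down from middle layer `ℓ ∈ {1,2}` to layer `3`. -/
lemma dle_down {ℓ : Fin 4} (h : ℓ = 1 ∨ ℓ = 2) (i : ZMod n) :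
    DLe n (ℓ, i) (3, i) (3 - ℓ.val) := by
  rcases h with rfl | rfl
  · exact dle_down1 i
  · exact dle_down2 i

/-- go down between middle layers. -/
lemma dle_mid {ℓ₁ ℓ₂ : Fin 4} (h₁ : ℓ₁ = 1 ∨ ℓ₁ = 2) (h₂ : ℓ₂ = 1 ∨ ℓ₂ = 2)
    (hle : ℓ₁.val ≤ ℓ₂.val) (i : ZMod n) : DLe n (ℓ₁, i) (ℓ₂, i) (ℓ₂.val - ℓ₁.val) := by
  rcases h₁ with rfl | rfl <;> rcases h₂ with rfl | rfl
  · exact DLe.refl _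
  · exact DLe.of_adj (adj_bc i)
  · exact absurd hle (by decide)
  · exact DLe.refl _

/-! ### connectivity -/

lemma reach_d0 [NeZero n] (h1 : (1 : ZMod n) ≠ 0) (x : Fin 4 × ZMod n) :
    (Sn n).Reachable x (3, (0 : ZMod n)) := by
  obtain ⟨ℓ, i⟩ := x
  have hvert : (Sn n).Reachable (ℓ, i) (3, i) := by
    fin_cases ℓ
    · exact ((DLe.of_adj (adj_ab i)).trans (dle_down1 i)).reachable
    · exact (dle_down1 i).reachable
    · exact (dle_down2 i).reachable
    · exact (DLe.refl _).reachable
  refine hvert.trans ?_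
  have := (dle_add h1 3 i ((-i).val)).reachable
  rwa [ZMod.natCast_zmod_val, add_neg_cancel] at this

lemma sn_connected [NeZero n] (h1 : (1 : ZMod n) ≠ 0) : (Sn n).Connected := by
  rw [SimpleGraph.connected_iff]
  refine ⟨fun x y => ?_, ⟨(3, 0)⟩⟩
  exact (reach_d0 h1 x).trans (reach_d0 h1 y).symm

/-! ### the sandwich lemma -/

lemma build [NeZero n] (hn : 2 ≤ n) (h1 : (1 : ZMod n) ≠ 0)
    {u v : Fin 4 × ZMod n} {j : ZMod n} {A B : ℕ}
    (hA : DLe n v u A) (hB : DLe n u (3, j) B) (hC : A + B ≤ psi j v) :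
    (Sn n).dist v (3, j) = (Sn n).dist v u + (Sn n).dist u (3, j) := by
  have t1 := hA.dist_le
  have t2 := hB.dist_le
  have t3 : psi j v ≤ (Sn n).dist v (3, j) :=
    psi_le_dist hn (hA.reachable.trans hB.reachable)
  have t4 := (sn_connected h1).dist_triangle (u := v) (v := u) (w := (3, j))
  omega


lemma DLe.mono {x y : Fin 4 × ZMod n} {s t : ℕ} (h : DLe n x y s) (hst : s ≤ t) :
    DLe n x y t := by
  obtain ⟨w, hw⟩ := h
  exact ⟨w, le_trans hw hst⟩

/-! ### case lemmas for `n = 2k+1` -/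

section Cases

variable (k : ℕ)

lemma one_ne_zero' (hk : 1 ≤ k) : (1 : ZMod (2 * k + 1)) ≠ 0 := by
  intro h
  have := congrArg ZMod.val h
  rw [ZMod.val_one'' (by omega), ZMod.val_zero] at this
  exact one_ne_zero this

lemma cd_fwd (hk : 1 ≤ k) (i : ZMod (2 * k + 1)) (c : ℕ) (hc : c ≤ k) :
    cdist i (i + (c : ZMod (2 * k + 1))) = c := by
  rw [cdist_add i c (by omega)]
  exact min_eq_left (by omega)

lemma cd_fwd' (hk : 1 ≤ k) (i : ZMod (2 * k + 1)) :
    cdist i (i + ((k + 1 : ℕ) : ZMod (2 * k + 1))) = k := by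
  rw [cdist_add i (k + 1) (by omega)]
  have : 2 * k + 1 - (k + 1) = k := by omega
  rw [this]
  exact min_eq_right (by omega)

lemma cd_bwd (hk : 1 ≤ k) (i : ZMod (2 * k + 1)) (c : ℕ) (hc : c ≤ k) :
    cdist i (i - (c : ZMod (2 * k + 1))) = c := by
  rw [cdist_sub i c (by omega)]
  exact min_eq_left (by omega)

lemma cd_bwd' (hk : 1 ≤ k) (i : ZMod (2 * k + 1)) :
    cdist i (i - ((k + 1 : ℕ) : ZMod (2 * k + 1))) = k := by
  rw [cdist_sub i (k + 1) (by omega)]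
  have : 2 * k + 1 - (k + 1) = k := by omega
  rw [this]
  exact min_eq_right (by omega)

/-- Case: both vertices in middle layers `{1, 2}`, with `v` not deeper than `u`. -/
lemma caseB (hk : 1 ≤ k) {lu lv : Fin 4} (hu : lu = 1 ∨ lu = 2) (hv : lv = 1 ∨ lv = 2)
    (hge : lv.val ≤ lu.val) (iu iv : ZMod (2 * k + 1)) :
    ∃ j : ZMod (2 * k + 1), (Sn (2 * k + 1)).dist (lv, iv) (3, j) =
      (Sn (2 * k + 1)).dist (lv, iv) (lu, iu) + (Sn (2 * k + 1)).dist (lu, iu) (3, j) := by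
  have hn2 : 2 ≤ 2 * k + 1 := by omega
  have h1 := one_ne_zero' k hk
  have hv0 : lv ≠ 0 := by rcases hv with rfl | rfl <;> decide
  have hlu3 : lu.val ≤ 2 := by rcases hu with rfl | rfl <;> decide
  set s := (iu - iv).val with hs
  have hsn : s < 2 * k + 1 := ZMod.val_lt _
  have hiu : iu = iv + (s : ZMod (2 * k + 1)) := by
    rw [hs, ZMod.natCast_zmod_val]; ring
  rcases le_or_gt s k with hsk | hsk
  · refine ⟨iv + ((k : ℕ) : ZMod (2 * k + 1)),
      build hn2 h1 (A := (lu.val - lv.val) + s) (B := (3 - lu.val) + (k - s)) ?_ ?_ ?_⟩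
    · have w1 := dle_add h1 lv iv s
      have w2 := dle_mid hv hu hge (iv + (s : ZMod (2 * k + 1)))
      have w3 := w1.trans w2
      rw [← hiu] at w3
      exact w3.mono (by omega)
    · have w1 := dle_down hu iu
      have w2 := dle_add h1 3 iu (k - s)
      have w3 := w1.trans w2
      have e : iu + ((k - s : ℕ) : ZMod (2 * k + 1)) = iv + ((k : ℕ) : ZMod (2 * k + 1)) := by
        rw [hiu, add_assoc, ← Nat.cast_add, show s + (k - s) = k by omega]
      rw [e] at w3
      exact w3
    · have hpsi : psi (iv + ((k : ℕ) : ZMod (2 * k + 1))) ((lv, iv) : Fin 4 × ZMod (2 * k + 1))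
          = (3 - lv.val) + k := by
        simp only [psi, if_neg hv0]
        rw [cd_fwd k hk iv k le_rfl]
      rw [hpsi]
      omega
  · set m := 2 * k + 1 - s with hm
    have hmk : 1 ≤ m ∧ m ≤ k := by omega
    have hsm : ((s : ℕ) : ZMod (2 * k + 1)) + ((m : ℕ) : ZMod (2 * k + 1)) = 0 := by
      rw [← Nat.cast_add, show s + m = 2 * k + 1 by omega, ZMod.natCast_self]
    have hium : iu = iv - ((m : ℕ) : ZMod (2 * k + 1)) := by
      rw [hiu, eq_sub_iff_add_eq, add_assoc, hsm, add_zero]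
    refine ⟨iv - ((k : ℕ) : ZMod (2 * k + 1)),
      build hn2 h1 (A := (lu.val - lv.val) + m) (B := (3 - lu.val) + (k - m)) ?_ ?_ ?_⟩
    · have w1 := dle_sub h1 lv iv m
      have w2 := dle_mid hv hu hge (iv - ((m : ℕ) : ZMod (2 * k + 1)))
      have w3 := w1.trans w2
      rw [← hium] at w3
      exact w3.mono (by omega)
    · have w1 := dle_down hu iu
      have w2 := dle_sub h1 3 iu (k - m)
      have w3 := w1.trans w2
      have e : iu - ((k - m : ℕ) : ZMod (2 * k + 1)) = iv - ((k : ℕ) : ZMod (2 * k + 1)) := by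
        rw [hium, sub_sub, ← Nat.cast_add, show m + (k - m) = k by omega]
      rw [e] at w3
      exact w3
    · have hpsi : psi (iv - ((k : ℕ) : ZMod (2 * k + 1))) ((lv, iv) : Fin 4 × ZMod (2 * k + 1))
          = (3 - lv.val) + k := by
        simp only [psi, if_neg hv0]
        rw [cd_bwd k hk iv k le_rfl]
      rw [hpsi]
      omega

/-- Case: both vertices in the `a`-layer. -/
lemma caseD (hk : 1 ≤ k) (iu iv : ZMod (2 * k + 1)) (hne : iu ≠ iv) :
    ∃ j : ZMod (2 * k + 1), (Sn (2 * k + 1)).dist (0, iv) (3, j) =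
      (Sn (2 * k + 1)).dist (0, iv) (0, iu) + (Sn (2 * k + 1)).dist (0, iu) (3, j) := by
  have hn2 : 2 ≤ 2 * k + 1 := by omega
  have h1 := one_ne_zero' k hk
  set s := (iu - iv).val with hs
  have hsn : s < 2 * k + 1 := ZMod.val_lt _
  have hs0 : s ≠ 0 := by
    intro h
    exact hne (by rw [← sub_eq_zero]; exact (ZMod.val_eq_zero _).mp h)
  have hiu : iu = iv + (s : ZMod (2 * k + 1)) := by
    rw [hs, ZMod.natCast_zmod_val]; ring
  rcases le_or_gt s k with hsk | hsk
  · refine ⟨iv + ((k : ℕ) : ZMod (2 * k + 1)),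
      build hn2 h1 (A := s) (B := 1 + (k - s) + 2) ?_ ?_ ?_⟩
    · have w1 := dle_add h1 0 iv s
      rw [← hiu] at w1
      exact w1
    · have w1 := DLe.of_adj (adj_ab iu)
      have w2 := dle_add h1 1 iu (k - s)
      have w3 := dle_down1 (iv + ((k : ℕ) : ZMod (2 * k + 1)))
      have e : iu + ((k - s : ℕ) : ZMod (2 * k + 1)) = iv + ((k : ℕ) : ZMod (2 * k + 1)) := by
        rw [hiu, add_assoc, ← Nat.cast_add, show s + (k - s) = k by omega]
      rw [e] at w2
      exact (w1.trans w2).trans w3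
    · have hpsi : psi (iv + ((k : ℕ) : ZMod (2 * k + 1))) ((0, iv) : Fin 4 × ZMod (2 * k + 1))
          = 3 + k := by
        simp only [psi, eq_self_iff_true, if_true]
        have e1 : cdist iv (iv + ((k : ℕ) : ZMod (2 * k + 1))) = k := cd_fwd k hk iv k le_rfl
        have e2 : cdist (iv - 1) (iv + ((k : ℕ) : ZMod (2 * k + 1))) = k := by
          have e : iv + ((k : ℕ) : ZMod (2 * k + 1))
              = (iv - 1) + ((k + 1 : ℕ) : ZMod (2 * k + 1)) := by
            push_cast; ring
          rw [e, cd_fwd' k hk]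
        rw [e1, e2, min_self]
      rw [hpsi]
      omega
  · set m := 2 * k + 1 - s with hm
    have hmk : 1 ≤ m ∧ m ≤ k := by omega
    have hsm : ((s : ℕ) : ZMod (2 * k + 1)) + ((m : ℕ) : ZMod (2 * k + 1)) = 0 := by
      rw [← Nat.cast_add, show s + m = 2 * k + 1 by omega, ZMod.natCast_self]
    have hium : iu = iv - ((m : ℕ) : ZMod (2 * k + 1)) := by
      rw [hiu, eq_sub_iff_add_eq, add_assoc, hsm, add_zero]
    refine ⟨iv - ((k + 1 : ℕ) : ZMod (2 * k + 1)),
      build hn2 h1 (A := m) (B := 1 + (k - m) + 2) ?_ ?_ ?_⟩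
    · have w1 := dle_sub h1 0 iv m
      rw [← hium] at w1
      exact w1
    · have w1 := DLe.of_adj (adj_ab' iu)
      have w2 := dle_sub h1 1 (iu - 1) (k - m)
      have w3 := dle_down1 (iv - ((k + 1 : ℕ) : ZMod (2 * k + 1)))
      have e : iu - 1 - ((k - m : ℕ) : ZMod (2 * k + 1))
          = iv - ((k + 1 : ℕ) : ZMod (2 * k + 1)) := by
        rw [hium, sub_sub, sub_sub]
        congr 1
        rw [show (1 : ZMod (2 * k + 1)) = ((1 : ℕ) : ZMod (2 * k + 1)) by norm_num,
          ← Nat.cast_add, ← Nat.cast_add, show m + (1 + (k - m)) = k + 1 by omega]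
      rw [e] at w2
      exact (w1.trans w2).trans w3
    · have hpsi : psi (iv - ((k + 1 : ℕ) : ZMod (2 * k + 1))) ((0, iv) : Fin 4 × ZMod (2 * k + 1))
          = 3 + k := by
        simp only [psi, eq_self_iff_true, if_true]
        have e1 : cdist iv (iv - ((k + 1 : ℕ) : ZMod (2 * k + 1))) = k := cd_bwd' k hk iv
        have e2 : cdist (iv - 1) (iv - ((k + 1 : ℕ) : ZMod (2 * k + 1))) = k := by
          have e : iv - ((k + 1 : ℕ) : ZMod (2 * k + 1))
              = (iv - 1) - ((k : ℕ) : ZMod (2 * k + 1)) := by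
            push_cast; ring
          rw [e, cd_bwd k hk _ k le_rfl]
        rw [e1, e2, min_self]
      rw [hpsi]
      omega

/-- Case: `u` in the `a`-layer, `v` in a middle layer.  Here `v` lies between `u` and `d_j`. -/
lemma caseC (hk : 1 ≤ k) {lv : Fin 4} (hv : lv = 1 ∨ lv = 2) (iu iv : ZMod (2 * k + 1)) :
    ∃ j : ZMod (2 * k + 1), (Sn (2 * k + 1)).dist (0, iu) (3, j) =
      (Sn (2 * k + 1)).dist (0, iu) (lv, iv) + (Sn (2 * k + 1)).dist (lv, iv) (3, j) := by
  have hn2 : 2 ≤ 2 * k + 1 := by omega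
  have h1 := one_ne_zero' k hk
  have hv1 : 1 ≤ lv.val ∧ lv.val ≤ 2 := by rcases hv with rfl | rfl <;> exact ⟨by decide, by decide⟩
  set s := (iv - (iu - 1)).val with hs
  have hsn : s < 2 * k + 1 := ZMod.val_lt _
  have hiv : iv = (iu - 1) + (s : ZMod (2 * k + 1)) := by
    rw [hs, ZMod.natCast_zmod_val]; ring
  by_cases hcase : 1 ≤ s ∧ s ≤ k
  · -- forward: iv = iu + (s - 1)
    set m := s - 1 with hmdef
    have hmk : m ≤ k - 1 := by omega
    have hivm : iv = iu + ((m : ℕ) : ZMod (2 * k + 1)) := by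
      rw [hiv, show s = m + 1 by omega]
      push_cast
      ring
    refine ⟨iu + ((k : ℕ) : ZMod (2 * k + 1)),
      build hn2 h1 (A := 1 + m + (lv.val - 1)) (B := (3 - lv.val) + (k - m)) ?_ ?_ ?_⟩
    · have w1 := DLe.of_adj (adj_ab iu)
      have w2 := dle_add h1 1 iu m
      rw [← hivm] at w2
      have w3 := dle_mid (Or.inl rfl) hv (by omega) iv
      have w4 := (w1.trans w2).trans w3
      exact w4.mono (by omega)
    · have w1 := dle_down hv iv
      have w2 := dle_add h1 3 iv (k - m)
      have e : iv + ((k - m : ℕ) : ZMod (2 * k + 1)) = iu + ((k : ℕ) : ZMod (2 * k + 1)) := by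
        rw [hivm, add_assoc, ← Nat.cast_add, show m + (k - m) = k by omega]
      rw [e] at w2
      exact w1.trans w2
    · have hpsi : psi (iu + ((k : ℕ) : ZMod (2 * k + 1))) ((0, iu) : Fin 4 × ZMod (2 * k + 1))
          = 3 + k := by
        simp only [psi, eq_self_iff_true, if_true]
        have e1 : cdist iu (iu + ((k : ℕ) : ZMod (2 * k + 1))) = k := cd_fwd k hk iu k le_rfl
        have e2 : cdist (iu - 1) (iu + ((k : ℕ) : ZMod (2 * k + 1))) = k := by
          have e : iu + ((k : ℕ) : ZMod (2 * k + 1))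
              = (iu - 1) + ((k + 1 : ℕ) : ZMod (2 * k + 1)) := by
            push_cast; ring
          rw [e, cd_fwd' k hk]
        rw [e1, e2, min_self]
      rw [hpsi]
      omega
  · -- backward: iv = iu - 1 - m
    set m := ((iu - 1) - iv).val with hmdef
    have hmn : m < 2 * k + 1 := ZMod.val_lt _
    have hzm : (s = 0 ∧ m = 0) ∨ s + m = 2 * k + 1 := by
      by_cases hz : iv - (iu - 1) = 0
      · left
        constructor
        · rw [hs, hz, ZMod.val_zero]
        · rw [hmdef, show (iu - 1) - iv = -(iv - (iu - 1)) by ring, hz, neg_zero, ZMod.val_zero]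
      · right
        rw [hs, hmdef, show (iu - 1) - iv = -(iv - (iu - 1)) by ring, ZMod.neg_val, if_neg hz]
        have := ZMod.val_lt (iv - (iu - 1))
        have hv0 : (iv - (iu - 1)).val ≠ 0 := fun h => hz ((ZMod.val_eq_zero _).mp h)
        omega
    have hmk : m ≤ k := by omega
    have hivm : iv = (iu - 1) - ((m : ℕ) : ZMod (2 * k + 1)) := by
      rw [hmdef, ZMod.natCast_zmod_val]; ring
    refine ⟨(iu - 1) - ((k : ℕ) : ZMod (2 * k + 1)),
      build hn2 h1 (A := 1 + m + (lv.val - 1)) (B := (3 - lv.val) + (k - m)) ?_ ?_ ?_⟩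
    · have w1 := DLe.of_adj (adj_ab' iu)
      have w2 := dle_sub h1 1 (iu - 1) m
      rw [← hivm] at w2
      have w3 := dle_mid (Or.inl rfl) hv (by omega) iv
      have w4 := (w1.trans w2).trans w3
      exact w4.mono (by omega)
    · have w1 := dle_down hv iv
      have w2 := dle_sub h1 3 iv (k - m)
      have e : iv - ((k - m : ℕ) : ZMod (2 * k + 1)) = (iu - 1) - ((k : ℕ) : ZMod (2 * k + 1)) := by
        rw [hivm, sub_sub, ← Nat.cast_add, show m + (k - m) = k by omega]
      rw [e] at w2
      exact w1.trans w2
    · have hpsi : psi ((iu - 1) - ((k : ℕ) : ZMod (2 * k + 1)))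
          ((0, iu) : Fin 4 × ZMod (2 * k + 1)) = 3 + k := by
        simp only [psi, eq_self_iff_true, if_true]
        have e1 : cdist iu ((iu - 1) - ((k : ℕ) : ZMod (2 * k + 1))) = k := by
          have e : (iu - 1) - ((k : ℕ) : ZMod (2 * k + 1))
              = iu - ((k + 1 : ℕ) : ZMod (2 * k + 1)) := by
            push_cast; ring
          rw [e, cd_bwd' k hk]
        have e2 : cdist (iu - 1) ((iu - 1) - ((k : ℕ) : ZMod (2 * k + 1))) = k :=
          cd_bwd k hk _ k le_rfl
        rw [e1, e2, min_self]
      rw [hpsi]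
      omega

end Cases

end SnAux

theorem d_layer_strong_resolving_Sn_odd (k : ℕ) (hk : 1 ≤ k) :
    IsStrongResolvingSet (Sn (2 * k + 1))
      {p : Fin 4 × ZMod (2 * k + 1) | p.1 = 3} := by
  intro u v huv
  obtain ⟨lu, iu⟩ := u
  obtain ⟨lv, iv⟩ := v
  by_cases hu3 : lu = 3
  · refine ⟨(lu, iu), hu3, Or.inl ?_⟩
    rw [SimpleGraph.dist_self, add_zero]
  by_cases hv3 : lv = 3
  · refine ⟨(lv, iv), hv3, Or.inr ?_⟩
    rw [SimpleGraph.dist_self, add_zero]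
  fin_cases lu <;> fin_cases lv <;> simp only [] at hu3 hv3 ⊢
  · -- (0,0)
    have hne : iu ≠ iv := by
      intro h
      exact huv (by rw [h])
    obtain ⟨j, hj⟩ := SnAux.caseD k hk iu iv hne
    exact ⟨(3, j), rfl, Or.inl hj⟩
  · -- (0,1)
    obtain ⟨j, hj⟩ := SnAux.caseC k hk (Or.inl rfl) iu iv
    exact ⟨(3, j), rfl, Or.inr hj⟩
  · -- (0,2)
    obtain ⟨j, hj⟩ := SnAux.caseC k hk (Or.inr rfl) iu iv
    exact ⟨(3, j), rfl, Or.inr hj⟩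
  · exact absurd rfl hv3
  · -- (1,0)
    obtain ⟨j, hj⟩ := SnAux.caseC k hk (Or.inl rfl) iv iu
    exact ⟨(3, j), rfl, Or.inl hj⟩
  · -- (1,1)
    obtain ⟨j, hj⟩ := SnAux.caseB k hk (Or.inl rfl) (Or.inl rfl) (by decide) iu iv
    exact ⟨(3, j), rfl, Or.inl hj⟩
  · -- (1,2): v deeper, swap roles
    obtain ⟨j, hj⟩ := SnAux.caseB k hk (Or.inr rfl) (Or.inl rfl) (by decide) iv iu
    exact ⟨(3, j), rfl, Or.inr hj⟩
  · exact absurd rfl hv3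
  · -- (2,0)
    obtain ⟨j, hj⟩ := SnAux.caseC k hk (Or.inr rfl) iv iu
    exact ⟨(3, j), rfl, Or.inl hj⟩
  · -- (2,1)
    obtain ⟨j, hj⟩ := SnAux.caseB k hk (Or.inr rfl) (Or.inl rfl) (by decide) iu iv
    exact ⟨(3, j), rfl, Or.inl hj⟩
  · -- (2,2)
    obtain ⟨j, hj⟩ := SnAux.caseB k hk (Or.inr rfl) (Or.inr rfl) (by decide) iu iv
    exact ⟨(3, j), rfl, Or.inl hj⟩
  · exact absurd rfl hv3
  · exact absurd rfl hu3
  · exact absurd rfl hu3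
  · exact absurd rfl hu3
  · exact absurd rfl hu3
end

section
/- For odd n = 2k+1 with k ≥ 1, every strong resolving set of S_n has at least n elements; hence sdim(S_n) = n for odd n ≥ 3. -/
set_option linter.unusedSectionVars false
set_option maxHeartbeats 1000000

namespace SnPf

/-- cyclic distance on `ZMod n` -/
def cyc {n : ℕ} (z : ZMod n) : ℕ := min z.val (n - z.val)

variable {n : ℕ} [NeZero n]

lemma cyc_zero : cyc (0 : ZMod n) = 0 := by simp [cyc]

lemma cyc_eq_zero {z : ZMod n} (h : cyc z = 0) : z = 0 := by
  have hv := ZMod.val_lt z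
  have : z.val = 0 := by simp only [cyc] at h; omega
  exact (ZMod.val_eq_zero z).mp this

lemma cyc_neg (z : ZMod n) : cyc (-z) = cyc z := by
  by_cases h : z = 0
  · simp [h]
  · have hv := ZMod.val_lt z
    have hv0 : z.val ≠ 0 := fun hh => h ((ZMod.val_eq_zero z).mp hh)
    simp only [cyc, ZMod.neg_val, if_neg h]
    omega

lemma cyc_natCast {t : ℕ} (h : t < n) : cyc (t : ZMod n) = min t (n - t) := by
  simp [cyc, ZMod.val_natCast_of_lt h]

lemma cyc_lip (z : ZMod n) : cyc (z + 1) ≤ cyc z + 1 ∧ cyc z ≤ cyc (z + 1) + 1 := by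
  have hv := ZMod.val_lt z
  have h1 : z + 1 = ((z.val + 1 : ℕ) : ZMod n) := by
    push_cast [ZMod.natCast_zmod_val]; ring
  rcases Nat.lt_or_ge (z.val + 1) n with h | h
  · rw [h1, cyc_natCast h]
    simp only [cyc]
    omega
  · have hn : z.val + 1 = n := by omega
    have h0 : z + 1 = 0 := by rw [h1, hn, ZMod.natCast_self]
    rw [h0, cyc_zero]
    simp only [cyc]
    omega


section graph
/-- distance formula -/
def Dd {n : ℕ} (u v : Fin 4 × ZMod n) : ℕ :=
  if u.1 = 0 ∧ v.1 = 0 then cyc (v.2 - u.2)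
  else if u.1 = 0 then v.1.val + min (cyc (v.2 - u.2)) (cyc (v.2 - u.2 + 1))
  else if v.1 = 0 then u.1.val + min (cyc (u.2 - v.2)) (cyc (u.2 - v.2 + 1))
  else max u.1.val v.1.val - min u.1.val v.1.val + cyc (v.2 - u.2)

variable {n : ℕ} [NeZero n]

lemma Dd_aa (i j : ZMod n) : Dd (0, i) (0, j) = cyc (j - i) := by simp [Dd]

lemma Dd_a (c : Fin 4) (hc : c ≠ 0) (i j : ZMod n) :
    Dd (0, i) (c, j) = c.val + min (cyc (j - i)) (cyc (j - i + 1)) := by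
  simp [Dd, hc]

lemma Dd_a' (c : Fin 4) (hc : c ≠ 0) (i j : ZMod n) :
    Dd (c, i) (0, j) = c.val + min (cyc (i - j)) (cyc (i - j + 1)) := by
  simp [Dd, hc]

lemma Dd_bb (c d : Fin 4) (hc : c ≠ 0) (hd : d ≠ 0) (i j : ZMod n) :
    Dd (c, i) (d, j) = max c.val d.val - min c.val d.val + cyc (j - i) := by
  simp [Dd, hc, hd]

lemma cyc_zero' : cyc (0 : ZMod n) = 0 := by simp [cyc]

lemma Dd_self (u : Fin 4 × ZMod n) : Dd u u = 0 := by
  obtain ⟨l, i⟩ := u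
  by_cases h : l = 0
  · subst h; simp [Dd_aa, cyc_zero']
  · rw [Dd_bb l l h h, sub_self, cyc_zero']; omega

-- adjacency lemmas
lemma adj_iff {x y : Fin 4 × ZMod n} :
    (Sn n).Adj x y ↔ x ≠ y ∧ (snRel n x y ∨ snRel n y x) := SimpleGraph.fromRel_adj _ _ _

variable (hn : 2 ≤ n)
include hn

lemma one_ne_zero' : (1 : ZMod n) ≠ 0 := by
  haveI : Fact (1 < n) := ⟨hn⟩
  exact fun h => by simpa [ZMod.val_one] using congrArg ZMod.val h

lemma adj_layer (l : Fin 4) (i : ZMod n) : (Sn n).Adj (l, i) (l, i + 1) := by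
  rw [adj_iff]
  refine ⟨fun h => ?_, Or.inl (Or.inl ⟨rfl, rfl⟩)⟩
  · have := congrArg Prod.snd h
    simp only at this
    exact one_ne_zero' hn (by linear_combination -this)

lemma adj_ab (i : ZMod n) : (Sn n).Adj (0, i) (1, i) := by
  rw [adj_iff]
  exact ⟨by simp, Or.inl (Or.inr (Or.inl ⟨rfl, rfl, Or.inl rfl⟩))⟩

lemma adj_ab' (i : ZMod n) : (Sn n).Adj (0, i + 1) (1, i) := by
  rw [adj_iff]
  exact ⟨by simp, Or.inl (Or.inr (Or.inl ⟨rfl, rfl, Or.inr rfl⟩))⟩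

lemma adj_bc (i : ZMod n) : (Sn n).Adj (1, i) (2, i) := by
  rw [adj_iff]
  exact ⟨by simp, Or.inl (Or.inr (Or.inr (Or.inl ⟨rfl, rfl, rfl⟩)))⟩

lemma adj_cd (i : ZMod n) : (Sn n).Adj (2, i) (3, i) := by
  rw [adj_iff]
  exact ⟨by simp, Or.inl (Or.inr (Or.inr (Or.inr ⟨rfl, rfl, rfl⟩)))⟩

lemma reach_layer (l : Fin 4) (i : ZMod n) (t : ℕ) :
    (Sn n).Reachable (l, i) (l, i + (t : ℕ)) := by
  induction t with
  | zero => simpa using SimpleGraph.Reachable.refl ((l, i) : Fin 4 × ZMod n)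
  | succ t ih =>
      refine ih.trans ?_
      have : (l, i + ((t+1 : ℕ) : ZMod n)) = (l, (i + (t:ℕ)) + 1) := by push_cast; ring_nf
      rw [this]
      exact (adj_layer hn l (i + (t:ℕ))).reachable

lemma reach_key : ∀ u : Fin 4 × ZMod n, (Sn n).Reachable ((0 : Fin 4), (0 : ZMod n)) u := by
  intro ⟨m, j⟩
  have h0 : (Sn n).Reachable ((0 : Fin 4), (0 : ZMod n)) ((0 : Fin 4), j) := by
    have := reach_layer hn 0 (0 : ZMod n) j.val
    rwa [zero_add, ZMod.natCast_zmod_val] at this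
  have h1 := ((adj_ab hn j).reachable)
  have h2 := ((adj_bc hn j).reachable)
  have h3 := ((adj_cd hn j).reachable)
  fin_cases m
  · exact h0
  · exact h0.trans h1
  · exact h0.trans (h1.trans h2)
  · exact h0.trans (h1.trans (h2.trans h3))

lemma connected : (Sn n).Connected := by
  rw [SimpleGraph.connected_iff]
  exact ⟨fun u v => (reach_key hn u).symm.trans (reach_key hn v), ⟨(0, 0)⟩⟩



lemma dist_adj {x y : Fin 4 × ZMod n} (h : (Sn n).Adj x y) : (Sn n).dist x y ≤ 1 := by
  have := SimpleGraph.dist_le h.toWalk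
  simpa using this

lemma tri (x y z : Fin 4 × ZMod n) :
    (Sn n).dist x z ≤ (Sn n).dist x y + (Sn n).dist y z :=
  (connected hn).dist_triangle

lemma dstep (l : Fin 4) (i : ZMod n) (t : ℕ) : (Sn n).dist (l, i) (l, i + (t : ℕ)) ≤ t := by
  induction t with
  | zero => simp
  | succ t ih =>
      have h2 : ((l, i + (t:ℕ)) : Fin 4 × ZMod n) = (l, i + (t:ℕ)) := rfl
      have e : (l, i + ((t+1 : ℕ) : ZMod n)) = (l, (i + (t:ℕ)) + 1) := by push_cast; ring_nf
      rw [e]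
      calc (Sn n).dist (l, i) ((l, (i + (t:ℕ)) + 1))
          ≤ (Sn n).dist (l, i) (l, i + (t:ℕ)) + (Sn n).dist (l, i + (t:ℕ)) (l, (i + (t:ℕ)) + 1) :=
            tri hn _ _ _
        _ ≤ t + 1 := add_le_add ih (dist_adj hn (adj_layer hn l _))

lemma dcyc (l : Fin 4) (i j : ZMod n) : (Sn n).dist (l, i) (l, j) ≤ cyc (j - i) := by
  by_cases hij : j = i
  · subst hij; simp [cyc, SimpleGraph.dist_self]
  · have h1 : j = i + ((j - i).val : ℕ) := by rw [ZMod.natCast_zmod_val]; ring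
    have h2 : i = j + ((i - j).val : ℕ) := by rw [ZMod.natCast_zmod_val]; ring
    have b1 : (Sn n).dist (l, i) (l, j) ≤ (j - i).val := by
      have := dstep hn l i (j - i).val; rwa [← h1] at this
    have b2 : (Sn n).dist (l, i) (l, j) ≤ (i - j).val := by
      rw [SimpleGraph.dist_comm]
      have := dstep hn l j (i - j).val; rwa [← h2] at this
    have hne : j - i ≠ 0 := sub_ne_zero.mpr hij
    have hv : (i - j).val = n - (j - i).val := by
      rw [show i - j = -(j - i) by ring, ZMod.neg_val, if_neg hne]
    have := ZMod.val_lt (j - i)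
    simp only [cyc]
    omega

lemma vert1 (c : Fin 4) (hc : c ≠ 0) (j : ZMod n) :
    (Sn n).dist (1, j) (c, j) ≤ c.val - 1 := by
  fin_cases c
  · exact absurd rfl hc
  · simp [SimpleGraph.dist_self]
  · simpa using dist_adj hn (adj_bc hn j)
  · calc (Sn n).dist ((1 : Fin 4), j) (3, j)
        ≤ (Sn n).dist (1, j) (2, j) + (Sn n).dist (2, j) (3, j) := tri hn _ _ _
      _ ≤ 2 := add_le_add (dist_adj hn (adj_bc hn j)) (dist_adj hn (adj_cd hn j))

lemma vert0 (c : Fin 4) (hc : c ≠ 0) (j : ZMod n) :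
    (Sn n).dist (0, j) (c, j) ≤ c.val := by
  have h1 : (1:Fin 4).val = 1 := rfl
  calc (Sn n).dist ((0 : Fin 4), j) (c, j)
      ≤ (Sn n).dist (0, j) (1, j) + (Sn n).dist (1, j) (c, j) := tri hn _ _ _
    _ ≤ 1 + (c.val - 1) := add_le_add (dist_adj hn (adj_ab hn j)) (vert1 hn c hc j)
    _ ≤ c.val := by have : c.val ≠ 0 := fun h => hc (Fin.ext h); omega

lemma vert0' (c : Fin 4) (hc : c ≠ 0) (j : ZMod n) :
    (Sn n).dist (0, j + 1) (c, j) ≤ c.val := by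
  calc (Sn n).dist ((0 : Fin 4), j + 1) (c, j)
      ≤ (Sn n).dist (0, j + 1) (1, j) + (Sn n).dist (1, j) (c, j) := tri hn _ _ _
    _ ≤ 1 + (c.val - 1) := add_le_add (dist_adj hn (adj_ab' hn j)) (vert1 hn c hc j)
    _ ≤ c.val := by have : c.val ≠ 0 := fun h => hc (Fin.ext h); omega

lemma vertb (c d : Fin 4) (hc : c ≠ 0) (hd : d ≠ 0) (j : ZMod n) :
    (Sn n).dist (c, j) (d, j) ≤ max c.val d.val - min c.val d.val := by
  have hbc := dist_adj hn (adj_bc hn j)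
  have hcd := dist_adj hn (adj_cd hn j)
  have hbd : (Sn n).dist ((1 : Fin 4), j) (3, j) ≤ 2 := by simpa using vert1 hn 3 (by decide) j
  fin_cases c <;> fin_cases d
  · exact absurd rfl hc
  · exact absurd rfl hc
  · exact absurd rfl hc
  · exact absurd rfl hc
  · exact absurd rfl hd
  · simp [SimpleGraph.dist_self]
  · simpa using hbc
  · simpa using hbd
  · exact absurd rfl hd
  · rw [SimpleGraph.dist_comm]; simpa using hbc
  · simp [SimpleGraph.dist_self]
  · simpa using hcd
  · exact absurd rfl hd
  · rw [SimpleGraph.dist_comm]; simpa using hbd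
  · rw [SimpleGraph.dist_comm]; simpa using hcd
  · simp [SimpleGraph.dist_self]

lemma dist_le_Dd (u v : Fin 4 × ZMod n) : (Sn n).dist u v ≤ Dd u v := by
  obtain ⟨c, i⟩ := u
  obtain ⟨d, j⟩ := v
  by_cases hc : c = 0 <;> by_cases hd : d = 0
  · subst hc; subst hd; rw [Dd_aa]; exact dcyc hn 0 i j
  · subst hc
    rw [Dd_a d hd i j]
    have b1 : (Sn n).dist ((0 : Fin 4), i) (d, j) ≤ cyc (j - i) + d.val :=
      le_trans (tri hn _ (0, j) _) (add_le_add (dcyc hn 0 i j) (vert0 hn d hd j))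
    have b2 : (Sn n).dist ((0 : Fin 4), i) (d, j) ≤ cyc (j - i + 1) + d.val := by
      refine le_trans (tri hn _ (0, j + 1) _) (add_le_add ?_ (vert0' hn d hd j))
      have := dcyc hn 0 i (j + 1)
      rwa [show j + 1 - i = j - i + 1 by ring] at this
    omega
  · subst hd
    rw [Dd_a' c hc i j, SimpleGraph.dist_comm]
    have b1 : (Sn n).dist ((0 : Fin 4), j) (c, i) ≤ cyc (i - j) + c.val :=
      le_trans (tri hn _ (0, i) _) (add_le_add (dcyc hn 0 j i) (vert0 hn c hc i))
    have b2 : (Sn n).dist ((0 : Fin 4), j) (c, i) ≤ cyc (i - j + 1) + c.val := by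
      refine le_trans (tri hn _ (0, i + 1) _) (add_le_add ?_ (vert0' hn c hc i))
      have := dcyc hn 0 j (i + 1)
      rwa [show i + 1 - j = i - j + 1 by ring] at this
    omega
  · rw [Dd_bb c d hc hd i j]
    calc (Sn n).dist (c, i) (d, j)
        ≤ (Sn n).dist (c, i) (c, j) + (Sn n).dist (c, j) (d, j) := tri hn _ _ _
      _ ≤ cyc (j - i) + (max c.val d.val - min c.val d.val) :=
          add_le_add (dcyc hn c i j) (vertb hn c d hc hd j)
      _ = _ := by omega

end graph

section graph2
variable {n : ℕ} [NeZero n]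

lemma val_pos {a : Fin 4} (ha : a ≠ 0) : 1 ≤ a.val :=
  Nat.pos_of_ne_zero fun h => ha (Fin.ext h)

lemma lip (u x y : Fin 4 × ZMod n) (h : snRel n x y) :
    Dd u y ≤ Dd u x + 1 ∧ Dd u x ≤ Dd u y + 1 := by
  obtain ⟨a, i⟩ := u
  obtain ⟨lx, p⟩ := x
  obtain ⟨ly, q⟩ := y
  have ha4 : a.val < 4 := a.is_lt
  rcases h with ⟨h1, h2⟩ | ⟨h1, h2, h3⟩ | ⟨h1, h2, h3⟩ | ⟨h1, h2, h3⟩ <;>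
    simp only at h1 h2 <;> subst h1
  · -- cycle edge : y = (lx, p+1)
    subst h2
    by_cases hA : a = 0 <;> by_cases hl : lx = 0
    · subst hA hl
      rw [Dd_aa, Dd_aa, show p + 1 - i = (p - i) + 1 by ring]
      have := cyc_lip (p - i); omega
    · subst hA
      rw [Dd_a lx hl, Dd_a lx hl,
        show p + 1 - i = (p - i) + 1 by ring, show p - i + 1 = (p - i) + 1 by ring,
        show (p - i) + 1 + 1 = ((p - i) + 1) + 1 by ring]
      have h1 := cyc_lip (p - i)
      have h2 := cyc_lip ((p - i) + 1)
      omega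
    · subst hl
      rw [Dd_a' a hA, Dd_a' a hA, show i - (p + 1) = (i - p - 1) by ring]
      have h1 := cyc_lip (i - p - 1)
      rw [show i - p - 1 + 1 = i - p by ring] at h1 ⊢
      have h2 := cyc_lip (i - p)
      omega
    · rw [Dd_bb a lx hA hl, Dd_bb a lx hA hl, show p + 1 - i = (p - i) + 1 by ring]
      have := cyc_lip (p - i); omega
  · -- a-b edges : x = (0,p), y = (1,q), p = q or p = q+1
    subst h2
    have h10 : (1 : Fin 4) ≠ 0 := by decide
    rcases h3 with h3 | h3 <;> simp only at h3 <;> subst h3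
    · by_cases hA : a = 0
      · subst hA
        rw [Dd_aa, Dd_a 1 h10]
        have := cyc_lip (p - i)
        simp only [Fin.val_one]
        omega
      · rw [Dd_a' a hA, Dd_bb a 1 hA h10]
        have e1 : cyc (i - p) = cyc (p - i) := by
          rw [show i - p = -(p - i) by ring, cyc_neg]
        have e2 : cyc (i - p + 1) = cyc (p - i - 1) := by
          rw [show i - p + 1 = -(p - i - 1) by ring, cyc_neg]
        have h1 := cyc_lip (p - i - 1)
        rw [show p - i - 1 + 1 = p - i by ring] at h1
        have := val_pos hA
        simp only [Fin.val_one]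
        omega
    · by_cases hA : a = 0
      · subst hA
        rw [Dd_aa, Dd_a 1 h10, show q + 1 - i = (q - i) + 1 by ring,
          show q - i + 1 = (q - i) + 1 by ring]
        have := cyc_lip (q - i)
        simp only [Fin.val_one]
        omega
      · rw [Dd_a' a hA, Dd_bb a 1 hA h10]
        have e1 : cyc (i - (q + 1)) = cyc ((q - i) + 1) := by
          rw [show i - (q + 1) = -((q - i) + 1) by ring, cyc_neg]
        have e2 : cyc (i - (q + 1) + 1) = cyc (q - i) := by
          rw [show i - (q + 1) + 1 = -(q - i) by ring, cyc_neg]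
        have h1 := cyc_lip (q - i)
        have := val_pos hA
        simp only [Fin.val_one]
        omega
  · -- b-c edge : x = (1,p), y = (2,q), p = q
    subst h2; subst h3
    by_cases hA : a = 0
    · subst hA
      rw [Dd_a 1 (by decide), Dd_a 2 (by decide)]
      simp only [Fin.val_one, Fin.val_two]
      omega
    · rw [Dd_bb a 1 hA (by decide), Dd_bb a 2 hA (by decide)]
      have := val_pos hA
      simp only [Fin.val_one, Fin.val_two]
      omega
  · -- c-d edge : x = (2,p), y = (3,q), p = q
    subst h2; subst h3
    by_cases hA : a = 0
    · subst hA
      rw [Dd_a 2 (by decide), Dd_a 3 (by decide)]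
      simp only [Fin.val_two]
      norm_num
      omega
    · rw [Dd_bb a 2 hA (by decide), Dd_bb a 3 hA (by decide)]
      have := val_pos hA
      simp only [Fin.val_two]
      norm_num
      omega

lemma lip_adj (u : Fin 4 × ZMod n) {x y : Fin 4 × ZMod n} (h : (Sn n).Adj x y) :
    Dd u y ≤ Dd u x + 1 := by
  rw [Sn, SimpleGraph.fromRel_adj] at h
  rcases h.2 with h2 | h2
  · exact (lip u x y h2).1
  · exact (lip u y x h2).2

lemma walk_bound (u : Fin 4 × ZMod n) {a b : Fin 4 × ZMod n} (p : (Sn n).Walk a b) :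
    Dd u b ≤ Dd u a + p.length := by
  induction p with
  | nil => simp
  | cons h q ih =>
      have := lip_adj u h
      rw [SimpleGraph.Walk.length_cons]
      omega

lemma Dd_le_dist (hn : 2 ≤ n) (u v : Fin 4 × ZMod n) : Dd u v ≤ (Sn n).dist u v := by
  obtain ⟨p, hp⟩ := (connected hn).exists_walk_length_eq_dist u v
  have := walk_bound u p
  rw [hp, Dd_self] at this
  omega


end graph2

section oddn
variable {k : ℕ} (hk : 1 ≤ k)

lemma cast_add_eq (a b c : ℕ) (h : a + b = c) :
    ((a : ℕ) : ZMod (2*k+1)) + ((b : ℕ) : ZMod (2*k+1)) = ((c : ℕ) : ZMod (2*k+1)) := by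
  rw [← Nat.cast_add, h]

lemma cast_n_zero : (((2*k+1 : ℕ)) : ZMod (2*k+1)) = 0 := ZMod.natCast_self _

include hk

lemma cyc_small {t : ℕ} (h : t ≤ k) : cyc ((t : ℕ) : ZMod (2*k+1)) = t := by
  rw [cyc_natCast (by omega)]; omega

lemma cyc_k1 : cyc (((k+1 : ℕ)) : ZMod (2*k+1)) = k := by
  rw [cyc_natCast (by omega)]; omega

lemma cyc_le (z : ZMod (2*k+1)) : cyc z ≤ k := by
  have := ZMod.val_lt z; simp only [cyc]; omega

lemma diff_cast (i j : ZMod (2*k+1)) : j = i + (((j - i).val : ℕ) : ZMod (2*k+1)) := by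
  rw [ZMod.natCast_zmod_val]; ring

lemma cycLem (i j : ZMod (2*k+1)) :
    ∃ m : ZMod (2*k+1), cyc (m - i) = cyc (j - i) + cyc (m - j) := by
  have ht : (j - i).val < 2*k+1 := ZMod.val_lt _
  have hj : j = i + (((j - i).val : ℕ) : ZMod (2*k+1)) := diff_cast hk i j
  set t := (j - i).val with htdef
  have hji : j - i = ((t : ℕ) : ZMod (2*k+1)) := by rw [hj]; ring
  rcases le_or_gt t k with h | h
  · refine ⟨i + ((k : ℕ) : ZMod (2*k+1)), ?_⟩
    have c1 := cast_add_eq (k := k) t (k - t) k (by omega)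
    have e1 : i + ((k : ℕ) : ZMod (2*k+1)) - i = ((k : ℕ) : ZMod (2*k+1)) := by ring
    have e2 : i + ((k : ℕ) : ZMod (2*k+1)) - j = (((k - t : ℕ)) : ZMod (2*k+1)) := by
      rw [hj]; linear_combination -c1
    rw [e1, e2, hji, cyc_small hk (le_refl k), cyc_small hk h, cyc_small hk (by omega)]
    omega
  · refine ⟨i - ((k : ℕ) : ZMod (2*k+1)), ?_⟩
    have c1 := cast_add_eq (k := k) (t - k - 1) (2*k+1) (k + t) (by omega)
    rw [cast_n_zero, add_zero] at c1
    have c2 := cast_add_eq (k := k) k t (k + t) rfl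
    have e1 : i - ((k : ℕ) : ZMod (2*k+1)) - i = -((k : ℕ) : ZMod (2*k+1)) := by ring
    have e2 : i - ((k : ℕ) : ZMod (2*k+1)) - j = -(((t - k - 1 : ℕ)) : ZMod (2*k+1)) := by
      rw [hj]; linear_combination c1 - c2
    rw [e1, e2, cyc_neg, cyc_neg, hji, cyc_small hk (le_refl k),
      cyc_natCast ht, cyc_small hk (by omega)]
    omega

lemma cycLem2 (i j : ZMod (2*k+1)) :
    ∃ m : ZMod (2*k+1), min (cyc (m - i)) (cyc (m - i + 1)) =
      min (cyc (j - i)) (cyc (j - i + 1)) + cyc (m - j) := by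
  have ht : (j - i).val < 2*k+1 := ZMod.val_lt _
  have hj : j = i + (((j - i).val : ℕ) : ZMod (2*k+1)) := diff_cast hk i j
  set t := (j - i).val with htdef
  have hji : j - i = ((t : ℕ) : ZMod (2*k+1)) := by rw [hj]; ring
  have ek1 : ((k : ℕ) : ZMod (2*k+1)) + 1 = (((k+1 : ℕ)) : ZMod (2*k+1)) := by push_cast; ring
  have et1 : ((t : ℕ) : ZMod (2*k+1)) + 1 = (((t+1 : ℕ)) : ZMod (2*k+1)) := by push_cast; ring
  rcases Nat.lt_or_ge t k with h | h
  · -- t ≤ k-1 : m = j + (k-t)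
    refine ⟨j + (((k - t : ℕ)) : ZMod (2*k+1)), ?_⟩
    have c1 := cast_add_eq (k := k) t (k - t) k (by omega)
    have e1 : j + (((k - t : ℕ)) : ZMod (2*k+1)) - i = ((k : ℕ) : ZMod (2*k+1)) := by
      rw [hj]; linear_combination c1
    have e2 : j + (((k - t : ℕ)) : ZMod (2*k+1)) - j = (((k - t : ℕ)) : ZMod (2*k+1)) := by ring
    rw [e1, e2, ek1, hji, et1, cyc_small hk (le_refl k), cyc_k1 hk,
      cyc_small hk (by omega), cyc_small hk (by omega), cyc_small hk (by omega)]
    omega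
  rcases Nat.eq_or_lt_of_le h with h' | h'
  · -- t = k : m = j
    refine ⟨j, ?_⟩
    have e1 : j - i = ((k : ℕ) : ZMod (2*k+1)) := by rw [hji, ← h']
    have e2 : j - j = (0 : ZMod (2*k+1)) := by ring
    rw [e2, e1, ek1, cyc_zero', cyc_small hk (le_refl k), cyc_k1 hk]
    omega
  · -- t ≥ k+1 : m = j - (k+1-s), s = n - t
    refine ⟨j - (((k + 1 - (2*k+1 - t) : ℕ)) : ZMod (2*k+1)), ?_⟩
    have c1 := cast_add_eq (k := k) k (k + 1 - (2*k+1 - t)) t (by omega)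
    have e1 : j - (((k + 1 - (2*k+1 - t) : ℕ)) : ZMod (2*k+1)) - i
        = ((k : ℕ) : ZMod (2*k+1)) := by
      rw [hj]; linear_combination -c1
    have e2 : j - (((k + 1 - (2*k+1 - t) : ℕ)) : ZMod (2*k+1)) - j
        = -(((k + 1 - (2*k+1 - t) : ℕ)) : ZMod (2*k+1)) := by ring
    have v1 : cyc ((k : ℕ) : ZMod (2*k+1)) = k := cyc_small hk (le_refl k)
    have v2 : cyc (((k+1 : ℕ)) : ZMod (2*k+1)) = k := cyc_k1 hk
    have v3 : cyc (((t : ℕ)) : ZMod (2*k+1)) = 2*k+1 - t := by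
      rw [cyc_natCast ht]; omega
    have v4 : cyc ((((k + 1 - (2*k+1 - t) : ℕ))) : ZMod (2*k+1)) = k + 1 - (2*k+1 - t) :=
      cyc_small hk (by omega)
    rw [e1, e2, ek1, hji, cyc_neg, v1, v2, v3, v4]
    rcases Nat.eq_or_lt_of_le (show t + 1 ≤ 2*k+1 by omega) with h2 | h2
    · have e5 : ((t : ℕ) : ZMod (2*k+1)) + 1 = 0 := by
        rw [et1, h2, cast_n_zero]
      rw [e5, cyc_zero']
      omega
    · have v5 : cyc (((t : ℕ) : ZMod (2*k+1)) + 1) = 2*k+1 - (t+1) := by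
        rw [et1, cyc_natCast h2]; omega
      rw [v5]
      omega

lemma cycLem3 (i j : ZMod (2*k+1)) (hij : i ≠ j) :
    ∃ m : ZMod (2*k+1),
      min (cyc (m - i)) (cyc (m - i + 1)) =
        cyc (j - i) + min (cyc (m - j)) (cyc (m - j + 1)) ∨
      min (cyc (m - j)) (cyc (m - j + 1)) =
        cyc (j - i) + min (cyc (m - i)) (cyc (m - i + 1)) := by
  have ht : (j - i).val < 2*k+1 := ZMod.val_lt _
  have hj : j = i + (((j - i).val : ℕ) : ZMod (2*k+1)) := diff_cast hk i j
  set t := (j - i).val with htdef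
  have hji : j - i = ((t : ℕ) : ZMod (2*k+1)) := by rw [hj]; ring
  have ht0 : t ≠ 0 := by
    intro h0
    apply hij
    rw [hj, h0]
    push_cast
    ring
  have ek1 : ((k : ℕ) : ZMod (2*k+1)) + 1 = (((k+1 : ℕ)) : ZMod (2*k+1)) := by push_cast; ring
  rcases le_or_gt t k with h | h
  · refine ⟨j + (((k - t : ℕ)) : ZMod (2*k+1)), Or.inl ?_⟩
    have c1 := cast_add_eq (k := k) t (k - t) k (by omega)
    have e1 : j + (((k - t : ℕ)) : ZMod (2*k+1)) - i = ((k : ℕ) : ZMod (2*k+1)) := by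
      rw [hj]; linear_combination c1
    have e2 : j + (((k - t : ℕ)) : ZMod (2*k+1)) - j = (((k - t : ℕ)) : ZMod (2*k+1)) := by ring
    have e4 : (((k - t : ℕ)) : ZMod (2*k+1)) + 1 = (((k - t + 1 : ℕ)) : ZMod (2*k+1)) := by
      push_cast; ring
    have v1 : cyc ((k : ℕ) : ZMod (2*k+1)) = k := cyc_small hk (le_refl k)
    have v2 : cyc (((k+1 : ℕ)) : ZMod (2*k+1)) = k := cyc_k1 hk
    have v3 : cyc (((t : ℕ)) : ZMod (2*k+1)) = t := cyc_small hk h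
    have v4 : cyc ((((k - t : ℕ))) : ZMod (2*k+1)) = k - t := cyc_small hk (by omega)
    have v5 : cyc ((((k - t + 1 : ℕ))) : ZMod (2*k+1)) = min (k - t + 1) (2*k+1 - (k-t+1)) :=
      cyc_natCast (by omega)
    rw [e1, e2, e4, ek1, hji, v1, v2, v3, v4, v5]
    omega
  · refine ⟨i + (((k - (2*k+1 - t) : ℕ)) : ZMod (2*k+1)), Or.inr ?_⟩
    have c0 := cast_add_eq (k := k) t (2*k+1 - t) (2*k+1) (by omega)
    rw [cast_n_zero] at c0
    have c1 := cast_add_eq (k := k) (k - (2*k+1 - t)) (2*k+1 - t) k (by omega)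
    have e1 : i + (((k - (2*k+1 - t) : ℕ)) : ZMod (2*k+1)) - i
        = (((k - (2*k+1 - t) : ℕ)) : ZMod (2*k+1)) := by ring
    have e2 : i + (((k - (2*k+1 - t) : ℕ)) : ZMod (2*k+1)) - j
        = ((k : ℕ) : ZMod (2*k+1)) := by
      rw [hj]; linear_combination c1 - c0
    have e4 : (((k - (2*k+1 - t) : ℕ)) : ZMod (2*k+1)) + 1
        = (((k - (2*k+1 - t) + 1 : ℕ)) : ZMod (2*k+1)) := by push_cast; ring
    have v1 : cyc ((k : ℕ) : ZMod (2*k+1)) = k := cyc_small hk (le_refl k)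
    have v2 : cyc (((k+1 : ℕ)) : ZMod (2*k+1)) = k := cyc_k1 hk
    have v3 : cyc (((t : ℕ)) : ZMod (2*k+1)) = 2*k+1 - t := by
      rw [cyc_natCast ht]; omega
    have v4 : cyc ((((k - (2*k+1 - t) : ℕ))) : ZMod (2*k+1)) = k - (2*k+1 - t) :=
      cyc_small hk (by omega)
    have v5 : cyc ((((k - (2*k+1 - t) + 1 : ℕ))) : ZMod (2*k+1)) = k - (2*k+1 - t) + 1 :=
      cyc_small hk (by omega)
    rw [e1, e2, e4, ek1, hji, v1, v2, v3, v4, v5]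
    omega

end oddn


-- === continuation inside namespace SnPf: diameter bound, dist_eq, resolve, main ===
section main
variable {k : ℕ}

lemma Dd_diam (hk : 1 ≤ k) (u v : Fin 4 × ZMod (2*k+1)) : Dd u v ≤ k + 3 := by
  obtain ⟨a, i⟩ := u
  obtain ⟨b, j⟩ := v
  have ha4 : a.val < 4 := a.is_lt
  have hb4 : b.val < 4 := b.is_lt
  by_cases ha : a = 0 <;> by_cases hb : b = 0
  · subst ha; subst hb; rw [Dd_aa]
    have := cyc_le hk (j - i); omega
  · subst ha; rw [Dd_a b hb]
    have h1 := cyc_le hk (j - i); have h2 := cyc_le hk (j - i + 1); omega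
  · subst hb; rw [Dd_a' a ha]
    have h1 := cyc_le hk (i - j); have h2 := cyc_le hk (i - j + 1); omega
  · rw [Dd_bb a b ha hb]
    have := cyc_le hk (j - i); omega

lemma dist_eq (hk : 1 ≤ k) (u v : Fin 4 × ZMod (2*k+1)) : (Sn (2*k+1)).dist u v = Dd u v :=
  le_antisymm (dist_le_Dd (by omega) u v) (Dd_le_dist (by omega) u v)

lemma resolve (hk : 1 ≤ k) (u v : Fin 4 × ZMod (2*k+1)) (huv : u ≠ v) :
    ∃ m : ZMod (2*k+1),
      (Sn (2*k+1)).dist v (3, m) = (Sn (2*k+1)).dist v u + (Sn (2*k+1)).dist u (3, m) ∨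
      (Sn (2*k+1)).dist u (3, m) = (Sn (2*k+1)).dist u v + (Sn (2*k+1)).dist v (3, m) := by
  obtain ⟨a, i⟩ := u
  obtain ⟨b, j⟩ := v
  have h30 : (3 : Fin 4) ≠ 0 := by decide
  have ha4 : a.val < 4 := a.is_lt
  have hb4 : b.val < 4 := b.is_lt
  by_cases ha : a = 0 <;> by_cases hb : b = 0
  · subst ha; subst hb
    have hij : i ≠ j := fun h => huv (by rw [h])
    obtain ⟨m, hm | hm⟩ := cycLem3 hk i j hij
    · refine ⟨m, Or.inr ?_⟩
      rw [dist_eq hk, dist_eq hk, dist_eq hk, Dd_a 3 h30, Dd_a 3 h30, Dd_aa]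
      show 3 + _ = _ + (3 + _)
      omega
    · refine ⟨m, Or.inl ?_⟩
      rw [dist_eq hk, dist_eq hk, dist_eq hk, Dd_a 3 h30, Dd_a 3 h30, Dd_aa,
        show i - j = -(j - i) by ring, cyc_neg]
      show 3 + _ = _ + (3 + _)
      omega
  · subst ha
    obtain ⟨m, hm⟩ := cycLem2 hk i j
    refine ⟨m, Or.inr ?_⟩
    rw [dist_eq hk, dist_eq hk, dist_eq hk, Dd_a 3 h30, Dd_a b hb, Dd_bb b 3 hb h30]
    have hb1 : 1 ≤ b.val := val_pos hb
    show 3 + _ = _ + _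
    omega
  · subst hb
    obtain ⟨m, hm⟩ := cycLem2 hk j i
    refine ⟨m, Or.inl ?_⟩
    rw [dist_eq hk, dist_eq hk, dist_eq hk, Dd_a 3 h30, Dd_a a ha, Dd_bb a 3 ha h30]
    have ha1 : 1 ≤ a.val := val_pos ha
    show 3 + _ = _ + _
    omega
  · have ha1 : 1 ≤ a.val := val_pos ha
    have hb1 : 1 ≤ b.val := val_pos hb
    rcases le_or_gt a.val b.val with h | h
    · obtain ⟨m, hm⟩ := cycLem hk i j
      refine ⟨m, Or.inr ?_⟩
      rw [dist_eq hk, dist_eq hk, dist_eq hk, Dd_bb a 3 ha h30, Dd_bb a b ha hb,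
        Dd_bb b 3 hb h30]
      omega
    · obtain ⟨m, hm⟩ := cycLem hk j i
      refine ⟨m, Or.inl ?_⟩
      rw [dist_eq hk, dist_eq hk, dist_eq hk, Dd_bb b 3 hb h30, Dd_bb b a hb ha,
        Dd_bb a 3 ha h30]
      omega

lemma lower_bound (hk : 1 ≤ k) (S : Finset (Fin 4 × ZMod (2 * k + 1)))
    (hS : IsStrongResolvingSet (Sn (2 * k + 1)) ↑S) : 2 * k + 1 ≤ S.card := by
  have hn2 : 2 ≤ 2*k+1 := by omega
  have key : ∀ i : ZMod (2*k+1),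
      ((0 : Fin 4), i) ∈ S ∨ ((3 : Fin 4), i + ((k : ℕ) : ZMod (2*k+1))) ∈ S := by
    intro i
    have hne : ((0 : Fin 4), i) ≠ ((3 : Fin 4), i + ((k : ℕ) : ZMod (2*k+1))) := by
      intro h
      have h1 : (0 : Fin 4) = 3 := congrArg Prod.fst h
      exact absurd h1 (by decide)
    obtain ⟨x, hxS, hx⟩ := hS ((0 : Fin 4), i) ((3 : Fin 4), i + ((k : ℕ) : ZMod (2*k+1))) hne
    have e1 : i + ((k : ℕ) : ZMod (2*k+1)) - i = ((k : ℕ) : ZMod (2*k+1)) := by ring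
    have e2 : ((k : ℕ) : ZMod (2*k+1)) + 1 = (((k+1 : ℕ)) : ZMod (2*k+1)) := by
      push_cast; ring
    have hdvu : (Sn (2*k+1)).dist ((3 : Fin 4), i + ((k : ℕ) : ZMod (2*k+1)))
        ((0 : Fin 4), i) = k + 3 := by
      rw [dist_eq hk, Dd_a' 3 (by decide), e1, e2, cyc_small hk (le_refl k), cyc_k1 hk]
      have h3 : ((3 : Fin 4)).val = 3 := rfl
      omega
    have hduv : (Sn (2*k+1)).dist ((0 : Fin 4), i)
        ((3 : Fin 4), i + ((k : ℕ) : ZMod (2*k+1))) = k + 3 := by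
      rw [SimpleGraph.dist_comm, hdvu]
    have hb1 : (Sn (2*k+1)).dist ((3 : Fin 4), i + ((k : ℕ) : ZMod (2*k+1))) x ≤ k + 3 :=
      le_trans (le_of_eq (dist_eq hk _ x)) (Dd_diam hk _ x)
    have hb2 : (Sn (2*k+1)).dist ((0 : Fin 4), i) x ≤ k + 3 :=
      le_trans (le_of_eq (dist_eq hk _ x)) (Dd_diam hk _ x)
    rcases hx with hx | hx
    · left
      have h0 : (Sn (2*k+1)).dist ((0 : Fin 4), i) x = 0 := by
        rw [hdvu] at hx; omega
      have heq : ((0 : Fin 4), i) = x := ((connected hn2).dist_eq_zero_iff).mp h0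
      rw [heq]
      exact hxS
    · right
      have h0 : (Sn (2*k+1)).dist ((3 : Fin 4), i + ((k : ℕ) : ZMod (2*k+1))) x = 0 := by
        rw [hduv] at hx; omega
      have heq : ((3 : Fin 4), i + ((k : ℕ) : ZMod (2*k+1))) = x :=
        ((connected hn2).dist_eq_zero_iff).mp h0
      rw [heq]
      exact hxS
  classical
  let f : ZMod (2*k+1) → Fin 4 × ZMod (2*k+1) :=
    fun i => if ((0 : Fin 4), i) ∈ S then ((0 : Fin 4), i)
             else ((3 : Fin 4), i + ((k : ℕ) : ZMod (2*k+1)))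
  have hfS : ∀ i, f i ∈ S := by
    intro i
    by_cases h : ((0 : Fin 4), i) ∈ S
    · simpa only [f, if_pos h] using h
    · simpa only [f, if_neg h] using (key i).resolve_left h
  have hinj : Function.Injective f := by
    intro i i' h
    simp only [f] at h
    split_ifs at h <;> rw [Prod.mk.injEq] at h
    · exact h.2
    · exact absurd h.1 (by decide)
    · exact absurd h.1 (by decide)
    · exact add_right_cancel h.2
  calc 2*k+1 = Fintype.card (ZMod (2*k+1)) := (ZMod.card _).symm
    _ = (Finset.univ : Finset (ZMod (2*k+1))).card := (Finset.card_univ).symm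
    _ ≤ S.card := Finset.card_le_card_of_injOn f (fun i _ => hfS i) hinj.injOn

end main
end SnPf

theorem sdim_Sn_odd (k : ℕ) (hk : 1 ≤ k) :
    (∀ S : Finset (Fin 4 × ZMod (2 * k + 1)),
      IsStrongResolvingSet (Sn (2 * k + 1)) ↑S → 2 * k + 1 ≤ S.card) ∧
    strongMetricDim (Sn (2 * k + 1)) = 2 * k + 1 := by
  refine ⟨fun S hS => SnPf.lower_bound hk S hS, ?_⟩
  classical
  have hmem : 2 * k + 1 ∈
      {c | ∃ S : Finset (Fin 4 × ZMod (2*k+1)),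
        IsStrongResolvingSet (Sn (2*k+1)) ↑S ∧ S.card = c} := by
    refine ⟨Finset.image (fun i => ((3 : Fin 4), i)) Finset.univ, ?_, ?_⟩
    · intro u v huv
      obtain ⟨m, hm⟩ := SnPf.resolve hk u v huv
      refine ⟨((3 : Fin 4), m), ?_, ?_⟩
      · simp
      · exact hm
    · rw [Finset.card_image_of_injective _ (fun i i' h => (Prod.mk.injEq _ _ _ _ ▸ h).2),
        Finset.card_univ, ZMod.card]
  exact le_antisymm (Nat.sInf_le hmem)
    (le_csInf ⟨_, hmem⟩ (fun c ⟨S, hS, hc⟩ => hc ▸ SnPf.lower_bound hk S hS))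
end
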